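/- arXiv:2002.08870 — 4 statements merged into one kernel-verified Lean document; each statement's English description precedes it below -/
import Mathlib

section
/- Let G be a finite group generated by a symmetric set S, let H be a normal subgroup of G, and let N be a normal subgroup of H that is also normal in G. Then diam(H, S) ≤ diam(H/N, S) + diam(N, S). -/
/-- The word length of `g` with respect to the (symmetric) set `S`:
the least `n` such that `g` is a product of `n` elements of `S`. -/
noncomputable def wordLength {G : Type*} [Group G] (S : Set G) (g : G) : ℕ :=
  sInf {n | ∃ l : List G, (∀ x ∈ l, x ∈ S) ∧ l.length = n ∧ l.prod = g}

/-- The diameter of a subset `H` of the Cayley graph `Γ(G, S)`,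
i.e. the largest word-metric distance between two elements of `H`. -/
noncomputable def subDiam {G : Type*} [Group G] (S : Set G) (H : Set G) : ℕ :=
  sSup {n | ∃ h₁ ∈ H, ∃ h₂ ∈ H, wordLength S (h₁⁻¹ * h₂) = n}

/-- The distance, induced on cosets of `N`, between the cosets `a•N` and `b•N`:
the infimum of word-metric distances between representatives. -/
noncomputable def cosetDist {G : Type*} [Group G] (S : Set G) (N : Subgroup G) (a b : G) : ℕ :=
  sInf {n | ∃ x y : G, x⁻¹ * a ∈ N ∧ y⁻¹ * b ∈ N ∧ wordLength S (x⁻¹ * y) = n}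

/-- The diameter of `H/N` with respect to the metric induced by the word metric of `S`. -/
noncomputable def quotDiam {G : Type*} [Group G] (S : Set G) (H : Set G) (N : Subgroup G) : ℕ :=
  sSup {n | ∃ a ∈ H, ∃ b ∈ H, cosetDist S N a b = n}

section Aux

variable {G : Type*} [Group G] {S : Set G}

lemma wl_set_nonempty (hsymm : ∀ x ∈ S, x⁻¹ ∈ S) (hgen : Subgroup.closure S = ⊤) (g : G) :
    {n | ∃ l : List G, (∀ x ∈ l, x ∈ S) ∧ l.length = n ∧ l.prod = g}.Nonempty := by
  have hg : g ∈ (Subgroup.closure S).toSubmonoid := by rw [hgen]; trivial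
  rw [Subgroup.closure_toSubmonoid] at hg
  obtain ⟨l, hl, hprod⟩ := Submonoid.exists_list_of_mem_closure hg
  refine ⟨l.length, l, fun x hx => ?_, rfl, hprod⟩
  rcases hl x hx with h | h
  · exact h
  · simpa using hsymm _ h

lemma wl_spec (hsymm : ∀ x ∈ S, x⁻¹ ∈ S) (hgen : Subgroup.closure S = ⊤) (g : G) :
    ∃ l : List G, (∀ x ∈ l, x ∈ S) ∧ l.length = wordLength S g ∧ l.prod = g :=
  Nat.sInf_mem (wl_set_nonempty hsymm hgen g)

lemma wl_mul (hsymm : ∀ x ∈ S, x⁻¹ ∈ S) (hgen : Subgroup.closure S = ⊤) (g h : G) :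
    wordLength S (g * h) ≤ wordLength S g + wordLength S h := by
  obtain ⟨l₁, hl₁, hlen₁, hprod₁⟩ := wl_spec hsymm hgen g
  obtain ⟨l₂, hl₂, hlen₂, hprod₂⟩ := wl_spec hsymm hgen h
  apply Nat.sInf_le
  exact ⟨l₁ ++ l₂, by
    refine ⟨fun x hx => ?_, by simp [hlen₁, hlen₂], by simp [hprod₁, hprod₂]⟩
    rcases List.mem_append.mp hx with h | h
    · exact hl₁ x h
    · exact hl₂ x h⟩

end Aux

/-- For a finite group `G` with symmetric generating set `S`, a normal subgroup `H` of `G`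
and a normal subgroup `N` of `H` which is also normal in `G`,
`diam(H, S) ≤ diam(H/N, S) + diam(N, S)`. -/
theorem subDiam_le_quotDiam_add_subDiam {G : Type*} [Group G] [Finite G] (S : Set G)
    (hsymm : ∀ x ∈ S, x⁻¹ ∈ S) (hgen : Subgroup.closure S = ⊤)
    (H N : Subgroup G) (hH : H.Normal) (hNH : N ≤ H) (hN : N.Normal) :
    subDiam S (H : Set G) ≤ quotDiam S (H : Set G) N + subDiam S (N : Set G) := by
  have hRfin : (Set.range (wordLength S)).Finite := Set.finite_range _
  have hNbdd : BddAbove {n | ∃ h₁ ∈ (N : Set G), ∃ h₂ ∈ (N : Set G),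
      wordLength S (h₁⁻¹ * h₂) = n} := by
    apply (hRfin.subset ?_).bddAbove
    rintro n ⟨a, -, b, -, hn⟩
    exact ⟨a⁻¹ * b, hn⟩
  have hQbdd : BddAbove {n | ∃ a ∈ (H : Set G), ∃ b ∈ (H : Set G), cosetDist S N a b = n} := by
    apply (hRfin.subset ?_).bddAbove
    rintro n ⟨a, -, b, -, hn⟩
    have hne : {n | ∃ x y : G, x⁻¹ * a ∈ N ∧ y⁻¹ * b ∈ N ∧ wordLength S (x⁻¹ * y) = n}.Nonempty :=
      ⟨wordLength S (a⁻¹ * b), a, b, by simpa using N.one_mem, by simpa using N.one_mem, rfl⟩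
    obtain ⟨x, y, -, -, hxy⟩ := Nat.sInf_mem hne
    exact ⟨x⁻¹ * y, hxy.trans hn⟩
  apply csSup_le'
  rintro n ⟨h₁, hh₁, h₂, hh₂, rfl⟩
  -- get the coset distance witnesses
  have hne : {n | ∃ x y : G, x⁻¹ * h₁ ∈ N ∧ y⁻¹ * h₂ ∈ N ∧ wordLength S (x⁻¹ * y) = n}.Nonempty :=
    ⟨wordLength S (h₁⁻¹ * h₂), h₁, h₂, by simpa using N.one_mem, by simpa using N.one_mem, rfl⟩
  obtain ⟨x, y, hx, hy, hxy⟩ := Nat.sInf_mem hne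
  set w := x⁻¹ * y with hw
  have hc : w⁻¹ * (h₁⁻¹ * x) * w * (y⁻¹ * h₂) ∈ N := by
    have h1 : h₁⁻¹ * x ∈ N := by simpa using N.inv_mem hx
    have h2 : w⁻¹ * (h₁⁻¹ * x) * w ∈ N := by
      simpa using hN.conj_mem _ h1 w⁻¹
    exact N.mul_mem h2 hy
  have hdecomp : h₁⁻¹ * h₂ = w * (w⁻¹ * (h₁⁻¹ * x) * w * (y⁻¹ * h₂)) := by
    simp [hw]; group
  have hle1 : wordLength S (h₁⁻¹ * h₂) ≤ wordLength S w
      + wordLength S (w⁻¹ * (h₁⁻¹ * x) * w * (y⁻¹ * h₂)) := by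
    rw [hdecomp]; exact wl_mul hsymm hgen _ _
  have hle2 : wordLength S w ≤ quotDiam S (H : Set G) N := by
    apply le_csSup hQbdd
    exact ⟨h₁, hh₁, h₂, hh₂, hxy.symm ▸ rfl⟩
  have hle3 : wordLength S (w⁻¹ * (h₁⁻¹ * x) * w * (y⁻¹ * h₂)) ≤ subDiam S (N : Set G) := by
    apply le_csSup hNbdd
    exact ⟨1, N.one_mem, _, hc, by simp⟩
  calc wordLength S (h₁⁻¹ * h₂) ≤ _ := hle1
    _ ≤ _ := add_le_add hle2 hle3
end

section
/- For every positive integer i, there exist positive integers C_i and n_i such that for every positive integer λ, there exist nonnegative integers a₁, ..., a_{n_i} and r with λ = a₁^i + ... + a_{n_i}^i + r and r ≤ C_i · λ^{1/i}. -/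
/-!
Greedy algorithm: subtract the largest `i`-th power `a ^ i ≤ λ`. The remainder is less than
`(a + 1) ^ i - a ^ i ≤ i 2^(i-1) a^(i-1)`, so it is `O(λ ^ ((i - 1) / i))`, and after `k` steps
it is `O(λ ^ ((1 - 1/i) ^ k))`. By Bernoulli's inequality `(1 - 1/i) ^ k ≤ 1/i` for
`k = (i - 1)² + 1`. To stay in `ℕ`, a bound `r ≤ C λ ^ (p / q)` is carried as `r ^ q ≤ C λ ^ p`.
-/

lemma exists_pow_le_lt_add_one_pow (d lam : ℕ) :
    ∃ a, a ^ (d + 1) ≤ lam ∧ lam < (a + 1) ^ (d + 1) := by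
  have hex : ∃ a, lam < (a + 1) ^ (d + 1) :=
    ⟨lam, (Nat.lt_succ_self lam).trans_le (Nat.le_self_pow d.succ_ne_zero _)⟩
  refine ⟨Nat.find hex, ?_, Nat.find_spec hex⟩
  rcases h : Nat.find hex with _ | b
  · simp
  · exact not_lt.mp (Nat.find_min hex (h ▸ b.lt_succ_self))

lemma add_one_pow_succ_le (a d : ℕ) :
    (a + 1) ^ (d + 1) ≤ a ^ (d + 1) + (d + 1) * (a + 1) ^ d := by
  induction d with
  | zero => simp
  | succ d ih =>
    have : a ^ (d + 1) ≤ (a + 1) ^ (d + 1) := Nat.pow_le_pow_left a.le_succ _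
    calc (a + 1) ^ (d + 2) = (a + 1) ^ (d + 1) * (a + 1) := pow_succ _ _
      _ ≤ (a ^ (d + 1) + (d + 1) * (a + 1) ^ d) * (a + 1) := by gcongr
      _ = a ^ (d + 2) + a ^ (d + 1) + (d + 1) * (a + 1) ^ (d + 1) := by ring
      _ ≤ a ^ (d + 2) + (d + 2) * (a + 1) ^ (d + 1) := by nlinarith

lemma exists_eq_pow_add_and_pow_le (d lam : ℕ) :
    ∃ a r, lam = a ^ (d + 1) + r ∧ r ^ (d + 1) ≤ ((d + 1) * 2 ^ d) ^ (d + 1) * lam ^ d := by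
  obtain ⟨a, hle, hlt⟩ := exists_pow_le_lt_add_one_pow d lam
  refine ⟨a, lam - a ^ (d + 1), by omega, ?_⟩
  rcases Nat.eq_zero_or_pos a with rfl | ha
  · have : lam = 0 := by simpa using hlt
    simp [this]
  have hr : lam - a ^ (d + 1) ≤ (d + 1) * 2 ^ d * a ^ d :=
    calc lam - a ^ (d + 1) ≤ (d + 1) * (a + 1) ^ d := by
          have := add_one_pow_succ_le a d; omega
      _ ≤ (d + 1) * (2 * a) ^ d := by gcongr; omega
      _ = (d + 1) * 2 ^ d * a ^ d := by ring
  calc (lam - a ^ (d + 1)) ^ (d + 1) ≤ ((d + 1) * 2 ^ d * a ^ d) ^ (d + 1) := by gcongr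
    _ = ((d + 1) * 2 ^ d) ^ (d + 1) * (a ^ (d + 1)) ^ d := by
        rw [mul_pow, ← pow_mul, ← pow_mul, mul_comm d]
    _ ≤ ((d + 1) * 2 ^ d) ^ (d + 1) * lam ^ d := by gcongr

lemma exists_eq_sum_pow_add_and_pow_le (d k : ℕ) :
    ∃ C, 0 < C ∧ ∀ lam : ℕ, ∃ (a : Fin k → ℕ) (r : ℕ),
      lam = ∑ j, a j ^ (d + 1) + r ∧ r ^ ((d + 1) ^ k) ≤ C * lam ^ (d ^ k) := by
  induction k with
  | zero => exact ⟨1, one_pos, fun lam => ⟨Fin.elim0, lam, by simp, by simp⟩⟩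
  | succ k ih =>
    obtain ⟨C, hC, hdecomp⟩ := ih
    set D := ((d + 1) * 2 ^ d) ^ (d + 1)
    refine ⟨C ^ (d + 1) * D ^ (d ^ k), by positivity, fun lam => ?_⟩
    obtain ⟨a₀, r₀, hlam, hr₀⟩ := exists_eq_pow_add_and_pow_le d lam
    obtain ⟨a, r, hr₀_eq, hr⟩ := hdecomp r₀
    refine ⟨Fin.cons a₀ a, r, by simp [Fin.sum_univ_succ, hlam, hr₀_eq, add_assoc], ?_⟩
    calc r ^ ((d + 1) ^ (k + 1)) = (r ^ ((d + 1) ^ k)) ^ (d + 1) := by rw [← pow_mul, pow_succ]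
      _ ≤ (C * r₀ ^ (d ^ k)) ^ (d + 1) := by gcongr
      _ = C ^ (d + 1) * (r₀ ^ (d + 1)) ^ (d ^ k) := by ring
      _ ≤ C ^ (d + 1) * (D * lam ^ d) ^ (d ^ k) := by gcongr
      _ = C ^ (d + 1) * D ^ (d ^ k) * lam ^ (d ^ (k + 1)) := by
          rw [mul_pow, ← pow_mul lam, ← pow_succ', mul_assoc]

lemma succ_mul_pow_le_succ_pow (d : ℕ) : (d + 1) * d ^ (d ^ 2 + 1) ≤ (d + 1) ^ (d ^ 2 + 1) := by
  have bernoulli :=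
    pow_add_mul_le_add_pow (a := d) (b := 1) (Nat.zero_le d) (by positivity) (d ^ 2 + 1)
  calc (d + 1) * d ^ (d ^ 2 + 1) = d ^ (d ^ 2 + 1) + d ^ 2 * d ^ d ^ 2 := by ring
    _ ≤ d ^ (d ^ 2 + 1) + (d ^ 2 + 1) * d ^ d ^ 2 := by gcongr; omega
    _ ≤ (d + 1) ^ (d ^ 2 + 1) := by simpa using bernoulli

lemma pow_le_mul_of_pow_le_mul_pow (d C lam r : ℕ) (hlam : 1 ≤ lam)
    (h : r ^ ((d + 1) ^ (d ^ 2 + 1)) ≤ C * lam ^ (d ^ (d ^ 2 + 1))) :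
    r ^ (d + 1) ≤ C * lam := by
  set m := (d + 1) ^ d ^ 2
  have hm : m ≠ 0 := by positivity
  have hexp : d ^ (d ^ 2 + 1) ≤ m :=
    Nat.le_of_mul_le_mul_left (by simpa [m, pow_succ'] using succ_mul_pow_le_succ_pow d) d.succ_pos
  refine (Nat.pow_le_pow_iff_left hm).mp ?_
  calc (r ^ (d + 1)) ^ m = r ^ ((d + 1) ^ (d ^ 2 + 1)) := by rw [← pow_mul, pow_succ']
    _ ≤ C * lam ^ (d ^ (d ^ 2 + 1)) := h
    _ ≤ C ^ m * lam ^ m := by gcongr; exact Nat.le_self_pow hm C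
    _ = (C * lam) ^ m := (mul_pow C lam m).symm

lemma natCast_le_mul_rpow_one_div {i C lam r : ℕ} (hi : i ≠ 0) (hC : 1 ≤ C)
    (h : r ^ i ≤ C * lam) : (r : ℝ) ≤ C * (lam : ℝ) ^ ((1 : ℝ) / i) := by
  have hiR : (0 : ℝ) < i := by positivity
  calc (r : ℝ) = ((r : ℝ) ^ i) ^ ((1 : ℝ) / i) := by
        rw [← Real.rpow_natCast, ← Real.rpow_mul (by positivity), mul_one_div_cancel hiR.ne',
          Real.rpow_one]
    _ ≤ ((C : ℝ) * lam) ^ ((1 : ℝ) / i) := by gcongr; exact_mod_cast h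
    _ = (C : ℝ) ^ ((1 : ℝ) / i) * (lam : ℝ) ^ ((1 : ℝ) / i) :=
        Real.mul_rpow (by positivity) (by positivity)
    _ ≤ C * (lam : ℝ) ^ ((1 : ℝ) / i) := by
        gcongr
        exact Real.rpow_le_self_of_one_le (by exact_mod_cast hC) (by
          rw [div_le_one hiR]; exact_mod_cast Nat.one_le_iff_ne_zero.mpr hi)

/-- For every positive integer `i` there exist positive integers `C` and `n` such that
every positive integer `lam` can be written as `a₁^i + ⋯ + aₙ^i + r` with nonnegative
integers `a₁, …, aₙ, r` and `r ≤ C * lam^(1/i)`. -/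
theorem sum_of_ith_powers_decomposition (i : ℕ) (hi : 1 ≤ i) :
    ∃ C n : ℕ, 0 < C ∧ 0 < n ∧ ∀ lam : ℕ, 1 ≤ lam →
      ∃ (a : Fin n → ℕ) (r : ℕ),
        lam = (∑ j, a j ^ i) + r ∧
        (r : ℝ) ≤ (C : ℝ) * (lam : ℝ) ^ ((1 : ℝ) / i) := by
  obtain ⟨d, rfl⟩ : ∃ d, i = d + 1 := ⟨i - 1, by omega⟩
  obtain ⟨C, hC, hdecomp⟩ := exists_eq_sum_pow_add_and_pow_le d (d ^ 2 + 1)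
  refine ⟨C, d ^ 2 + 1, hC, by positivity, fun lam hlam => ?_⟩
  obtain ⟨a, r, hsum, hr⟩ := hdecomp lam
  exact ⟨a, r, hsum, natCast_le_mul_rpow_one_div d.succ_ne_zero hC
    (pow_le_mul_of_pow_le_mul_pow d C lam r hlam hr)⟩
end

section
/- Let G be a group and i ≥ 1. There is a surjective group homomorphism from the i-fold tensor power (G^{ab})^{⊗i} onto G^(i)/G^(i+1), induced by the multilinear map sending (g₁, ..., g_i) to the class of the nested commutator [g₁, [g₂, ..., [g_{i-1}, g_i]...]] modulo G^(i+1). -/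
open scoped TensorProduct
open scoped commutatorElement

/-- The nested commutator `⁅s₁, ⁅s₂, …, ⁅s_{i-1}, s_i⁆…⁆⁆` of a list of group elements. -/
def nestedComm {G : Type*} [Group G] : List G → G
  | [] => 1
  | [s] => s
  | s :: t :: l => ⁅s, nestedComm (t :: l)⁆

namespace NestedAux

open Subgroup QuotientGroup

variable {G : Type*} [Group G]

theorem nestedComm_cons' (s : G) {l : List G} (hl : l ≠ []) :
    nestedComm (s :: l) = ⁅s, nestedComm l⁆ := by
  cases l with
  | nil => exact absurd rfl hl
  | cons t l => rfl

theorem top_comm_le (n : ℕ) :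
    ⁅(⊤ : Subgroup G), (⊤ : Subgroup G).lowerCentralSeries n⁆ ≤ (⊤ : Subgroup G).lowerCentralSeries (n + 1) := by
  rw [Subgroup.commutator_comm]
  exact le_of_eq rfl

theorem mk_comm_deep (m : ℕ) (g : G) {z : G} (hz : z ∈ (⊤ : Subgroup G).lowerCentralSeries (m + 1)) :
    (QuotientGroup.mk ⁅g, z⁆ : G ⧸ (⊤ : Subgroup G).lowerCentralSeries (m + 2)) = 1 :=
  (QuotientGroup.eq_one_iff _).mpr (top_comm_le (m + 1) (commutator_mem_commutator (Subgroup.mem_top _) hz))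

theorem mk_comm_swap (m : ℕ) {u v : G} (hu : u ∈ (⊤ : Subgroup G).lowerCentralSeries m)
    (hv : v ∈ (⊤ : Subgroup G).lowerCentralSeries m) :
    (QuotientGroup.mk (u * v) : G ⧸ (⊤ : Subgroup G).lowerCentralSeries (m + 1)) = QuotientGroup.mk (v * u) := by
  have h : ⁅u, v⁆ ∈ (⊤ : Subgroup G).lowerCentralSeries (m + 1) :=
    top_comm_le m (commutator_mem_commutator (Subgroup.mem_top u) hv)
  have hid : u * v = ⁅u, v⁆ * (v * u) := by rw [commutatorElement_def]; group
  rw [hid, QuotientGroup.mk_mul, (QuotientGroup.eq_one_iff _).mpr h, one_mul]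

theorem mk_comm_mul_right (m : ℕ) (g : G) {x y : G} (hx : x ∈ (⊤ : Subgroup G).lowerCentralSeries m)
    (hy : y ∈ (⊤ : Subgroup G).lowerCentralSeries m) :
    (QuotientGroup.mk ⁅g, x * y⁆ : G ⧸ (⊤ : Subgroup G).lowerCentralSeries (m + 2)) =
      QuotientGroup.mk ⁅g, x⁆ * QuotientGroup.mk ⁅g, y⁆ := by
  have hgy : ⁅g, y⁆ ∈ (⊤ : Subgroup G).lowerCentralSeries (m + 1) :=
    top_comm_le m (commutator_mem_commutator (Subgroup.mem_top _) hy)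
  have herr : ⁅x, ⁅g, y⁆⁆ ∈ (⊤ : Subgroup G).lowerCentralSeries (m + 2) :=
    top_comm_le (m + 1) (commutator_mem_commutator (Subgroup.mem_top x) hgy)
  have hid : ⁅g, x * y⁆ = ⁅g, x⁆ * (⁅x, ⁅g, y⁆⁆ * ⁅g, y⁆) := by
    simp [commutatorElement_def]; group
  rw [hid, QuotientGroup.mk_mul, QuotientGroup.mk_mul,
    (QuotientGroup.eq_one_iff _).mpr herr, one_mul]

theorem mk_comm_mul_left (m : ℕ) (g h : G) {x : G} (hx : x ∈ (⊤ : Subgroup G).lowerCentralSeries m) :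
    (QuotientGroup.mk ⁅g * h, x⁆ : G ⧸ (⊤ : Subgroup G).lowerCentralSeries (m + 2)) =
      QuotientGroup.mk ⁅g, x⁆ * QuotientGroup.mk ⁅h, x⁆ := by
  have hgx : ⁅g, x⁆ ∈ (⊤ : Subgroup G).lowerCentralSeries (m + 1) :=
    top_comm_le m (commutator_mem_commutator (Subgroup.mem_top _) hx)
  have hhx : ⁅h, x⁆ ∈ (⊤ : Subgroup G).lowerCentralSeries (m + 1) :=
    top_comm_le m (commutator_mem_commutator (Subgroup.mem_top _) hx)
  have herr : ⁅g, ⁅h, x⁆⁆ ∈ (⊤ : Subgroup G).lowerCentralSeries (m + 2) :=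
    top_comm_le (m + 1) (commutator_mem_commutator (Subgroup.mem_top _) hhx)
  have hid : ⁅g * h, x⁆ = ⁅g, ⁅h, x⁆⁆ * (⁅h, x⁆ * ⁅g, x⁆) := by
    simp [commutatorElement_def]; group
  rw [hid, QuotientGroup.mk_mul, (QuotientGroup.eq_one_iff _).mpr herr, one_mul,
    mk_comm_swap (m + 1) hhx hgx, QuotientGroup.mk_mul]

theorem nestedComm_mem : ∀ l : List G, nestedComm l ∈ (⊤ : Subgroup G).lowerCentralSeries (l.length - 1)
  | [] => by simp [nestedComm]
  | [s] => by simp [nestedComm]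
  | s :: t :: l => by
    have h := nestedComm_mem (t :: l)
    simp only [List.length_cons, Nat.add_sub_cancel] at h ⊢
    exact top_comm_le _ (commutator_mem_commutator (Subgroup.mem_top _) h)

theorem mk_comm_deep' (m : ℕ) (g : G) {z : G} (hz : z ∈ (⊤ : Subgroup G).lowerCentralSeries (m + 1))
    (n : ℕ) (hn : m + 2 = n) :
    (QuotientGroup.mk ⁅g, z⁆ : G ⧸ (⊤ : Subgroup G).lowerCentralSeries n) = 1 := by
  subst hn; exact mk_comm_deep m g hz

theorem mk_comm_mul_right' (m : ℕ) (g : G) {x y : G} (hx : x ∈ (⊤ : Subgroup G).lowerCentralSeries m)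
    (hy : y ∈ (⊤ : Subgroup G).lowerCentralSeries m) (n : ℕ) (hn : m + 2 = n) :
    (QuotientGroup.mk ⁅g, x * y⁆ : G ⧸ (⊤ : Subgroup G).lowerCentralSeries n) =
      QuotientGroup.mk ⁅g, x⁆ * QuotientGroup.mk ⁅g, y⁆ := by
  subst hn; exact mk_comm_mul_right m g hx hy

theorem mk_comm_mul_left' (m : ℕ) (g h : G) {x : G} (hx : x ∈ (⊤ : Subgroup G).lowerCentralSeries m)
    (n : ℕ) (hn : m + 2 = n) :
    (QuotientGroup.mk ⁅g * h, x⁆ : G ⧸ (⊤ : Subgroup G).lowerCentralSeries n) =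
      QuotientGroup.mk ⁅g, x⁆ * QuotientGroup.mk ⁅h, x⁆ := by
  subst hn; exact mk_comm_mul_left m g h hx

theorem mk_nested_mul : ∀ (l₁ : List G) (x y : G) (l₂ : List G) (n : ℕ)
    (_hn : l₁.length + l₂.length + 1 = n),
    (QuotientGroup.mk (nestedComm (l₁ ++ (x * y) :: l₂)) : G ⧸ (⊤ : Subgroup G).lowerCentralSeries n) =
      QuotientGroup.mk (nestedComm (l₁ ++ x :: l₂)) *
        QuotientGroup.mk (nestedComm (l₁ ++ y :: l₂))
  | [], x, y, [], n, hn => by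
    subst hn
    simp only [List.nil_append, List.length_nil, Nat.add_zero, Nat.zero_add]
    show (QuotientGroup.mk (x * y) : G ⧸ (⊤ : Subgroup G).lowerCentralSeries 1) = _
    rw [QuotientGroup.mk_mul]; rfl
  | [], x, y, t :: l₂, n, hn => by
    subst hn
    have hw := nestedComm_mem (t :: l₂)
    simp only [List.length_cons, Nat.add_sub_cancel] at hw
    simp only [List.nil_append]
    rw [nestedComm_cons' _ (List.cons_ne_nil t l₂), nestedComm_cons' _ (List.cons_ne_nil t l₂),
      nestedComm_cons' _ (List.cons_ne_nil t l₂)]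
    exact mk_comm_mul_left' l₂.length x y hw _
      (by simp only [List.length_nil, List.length_cons]; omega)
  | s :: l₁, x, y, l₂, n, hn => by
    subst hn
    have hne : ∀ z : G, l₁ ++ z :: l₂ ≠ [] := fun z h => by
      simpa using congrArg List.length h
    have hlen : ∀ z : G, (l₁ ++ z :: l₂).length = l₁.length + l₂.length + 1 := fun z => by
      simp [List.length_append]; omega
    set k := l₁.length + l₂.length with hk
    set B := nestedComm (l₁ ++ x :: l₂) with hB
    set C := nestedComm (l₁ ++ y :: l₂) with hC
    set A := nestedComm (l₁ ++ (x * y) :: l₂) with hA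
    have hBmem : B ∈ (⊤ : Subgroup G).lowerCentralSeries k := by
      have := nestedComm_mem (l₁ ++ x :: l₂); rwa [hlen, Nat.add_sub_cancel] at this
    have hCmem : C ∈ (⊤ : Subgroup G).lowerCentralSeries k := by
      have := nestedComm_mem (l₁ ++ y :: l₂); rwa [hlen, Nat.add_sub_cancel] at this
    have IH := mk_nested_mul l₁ x y l₂ (k + 1) (by omega)
    have hz : (B * C)⁻¹ * A ∈ (⊤ : Subgroup G).lowerCentralSeries (k + 1) := by
      rw [← QuotientGroup.eq, QuotientGroup.mk_mul]
      exact IH.symm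
    set z := (B * C)⁻¹ * A with hzdef
    have hzmem : z ∈ (⊤ : Subgroup G).lowerCentralSeries k :=
      Subgroup.lowerCentralSeries_antitone ⊤ (Nat.le_succ k) hz
    have hAeq : A = B * (C * z) := by rw [hzdef]; group
    have hmod : k + 2 = (s :: l₁).length + l₂.length + 1 := by
      simp only [List.length_cons, hk]; omega
    rw [List.cons_append, List.cons_append, List.cons_append,
      nestedComm_cons' _ (hne _), nestedComm_cons' _ (hne _), nestedComm_cons' _ (hne _),
      ← hA, ← hB, ← hC, hAeq,
      mk_comm_mul_right' k s hBmem (mul_mem hCmem hzmem) _ hmod,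
      mk_comm_mul_right' k s hCmem hzmem _ hmod,
      mk_comm_deep' k s hz _ hmod, mul_one]

theorem ofFn_update {i : ℕ} [inst : DecidableEq (Fin i)] (g : Fin i → G) (j : Fin i) (x : G) :
    List.ofFn (Function.update g j x) =
      (List.ofFn g).take (j : ℕ) ++ x :: (List.ofFn g).drop ((j : ℕ) + 1) := by
  have hinst : inst = instDecidableEqFin i := Subsingleton.elim _ _
  subst hinst
  rw [List.ofFn_eq_map, (List.nodup_finRange i).map_update, if_pos (List.mem_finRange j),
    List.idxOf_finRange, ← List.ofFn_eq_map,
    List.set_eq_take_cons_drop _ (by simpa using j.isLt)]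

theorem nested_ofFn_mem {i : ℕ} (g : Fin i → G) :
    nestedComm (List.ofFn g) ∈ (⊤ : Subgroup G).lowerCentralSeries (i - 1) := by
  have := nestedComm_mem (List.ofFn g)
  rwa [List.length_ofFn] at this

theorem comm_in_quot (i : ℕ) {u v : G} (hu : u ∈ (⊤ : Subgroup G).lowerCentralSeries (i - 1))
    (hv : v ∈ (⊤ : Subgroup G).lowerCentralSeries (i - 1)) :
    (QuotientGroup.mk (u * v) : G ⧸ (⊤ : Subgroup G).lowerCentralSeries i) = QuotientGroup.mk (v * u) := by
  have h := mk_comm_swap (i - 1) hu hv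
  have hle : (⊤ : Subgroup G).lowerCentralSeries (i - 1 + 1) ≤ (⊤ : Subgroup G).lowerCentralSeries i :=
    Subgroup.lowerCentralSeries_antitone ⊤ (by omega)
  calc (QuotientGroup.mk (u * v) : G ⧸ (⊤ : Subgroup G).lowerCentralSeries i)
      = QuotientGroup.mk ((v * u) * ((v * u)⁻¹ * (u * v))) := by group
    _ = QuotientGroup.mk (v * u) := by
        have hz : (v * u)⁻¹ * (u * v) ∈ (⊤ : Subgroup G).lowerCentralSeries i :=
          hle ((QuotientGroup.eq (s := (⊤ : Subgroup G).lowerCentralSeries (i - 1 + 1))).mp h.symm)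
        rw [QuotientGroup.mk_mul, (QuotientGroup.eq_one_iff _).mpr hz, mul_one]

theorem slot_mul {i : ℕ} [inst : DecidableEq (Fin i)] (g : Fin i → G) (j : Fin i) (x y : G) :
    (QuotientGroup.mk (nestedComm (List.ofFn (Function.update g j (x * y)))) :
        G ⧸ (⊤ : Subgroup G).lowerCentralSeries i) =
      QuotientGroup.mk (nestedComm (List.ofFn (Function.update g j x))) *
        QuotientGroup.mk (nestedComm (List.ofFn (Function.update g j y))) := by
  rw [ofFn_update, ofFn_update, ofFn_update]
  exact mk_nested_mul _ x y _ i (by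
    simp only [List.length_take, List.length_drop, List.length_ofFn]
    have := j.isLt; omega)

/-- The slot map as a `MonoidHom`. -/
noncomputable def slotHom {i : ℕ} [inst : DecidableEq (Fin i)] (g : Fin i → G) (j : Fin i) :
    G →* G ⧸ (⊤ : Subgroup G).lowerCentralSeries i :=
  MonoidHom.mk' (fun x => QuotientGroup.mk (nestedComm (List.ofFn (Function.update g j x))))
    (slot_mul g j)

theorem slot_congr {i : ℕ} [inst : DecidableEq (Fin i)] (g : Fin i → G) (j : Fin i) {x x' : G}
    (h : Abelianization.of x = Abelianization.of x') :
    (QuotientGroup.mk (nestedComm (List.ofFn (Function.update g j x))) :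
        G ⧸ (⊤ : Subgroup G).lowerCentralSeries i) =
      QuotientGroup.mk (nestedComm (List.ofFn (Function.update g j x'))) := by
  have hker : commutator G ≤ (slotHom g j).ker := by
    rw [commutator_def, Subgroup.commutator_le]
    intro a _ b _
    rw [MonoidHom.mem_ker, map_commutatorElement, commutatorElement_eq_one_iff_commute]
    show slotHom g j a * slotHom g j b = slotHom g j b * slotHom g j a
    show (QuotientGroup.mk (nestedComm (List.ofFn (Function.update g j a))) :
          G ⧸ (⊤ : Subgroup G).lowerCentralSeries i) *
        QuotientGroup.mk (nestedComm (List.ofFn (Function.update g j b))) =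
      QuotientGroup.mk (nestedComm (List.ofFn (Function.update g j b))) *
        QuotientGroup.mk (nestedComm (List.ofFn (Function.update g j a)))
    rw [← QuotientGroup.mk_mul, ← QuotientGroup.mk_mul]
    exact comm_in_quot i (nested_ofFn_mem _) (nested_ofFn_mem _)
  have hd : x⁻¹ * x' ∈ commutator G := by
    have h1 : Abelianization.of (x⁻¹ * x') = 1 := by rw [map_mul, map_inv, h, inv_mul_cancel]
    exact (QuotientGroup.eq_one_iff _).mp h1
  have : slotHom g j x' = slotHom g j (x * (x⁻¹ * x')) := by rw [mul_inv_cancel_left]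
  calc (QuotientGroup.mk (nestedComm (List.ofFn (Function.update g j x))) :
        G ⧸ (⊤ : Subgroup G).lowerCentralSeries i) = slotHom g j x := rfl
    _ = slotHom g j x * slotHom g j (x⁻¹ * x') := by rw [hker hd, mul_one]
    _ = slotHom g j (x * (x⁻¹ * x')) := (map_mul _ _ _).symm
    _ = slotHom g j x' := by rw [mul_inv_cancel_left]

theorem psi_congr {i : ℕ} (g g' : Fin i → G)
    (h : ∀ j, Abelianization.of (g j) = Abelianization.of (g' j)) :
    (QuotientGroup.mk (nestedComm (List.ofFn g)) : G ⧸ (⊤ : Subgroup G).lowerCentralSeries i) =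
      QuotientGroup.mk (nestedComm (List.ofFn g')) := by
  classical
  have key : ∀ n : ℕ,
      (QuotientGroup.mk (nestedComm (List.ofFn fun j => if (j : ℕ) < n then g' j else g j)) :
        G ⧸ (⊤ : Subgroup G).lowerCentralSeries i) = QuotientGroup.mk (nestedComm (List.ofFn g)) := by
    intro n
    induction n with
    | zero => simp
    | succ n ih =>
      by_cases hn : n < i
      · have h1 : (fun j : Fin i => if (j : ℕ) < n + 1 then g' j else g j)
            = Function.update (fun j : Fin i => if (j : ℕ) < n then g' j else g j)
                ⟨n, hn⟩ (g' ⟨n, hn⟩) := by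
          funext j
          rcases eq_or_ne j ⟨n, hn⟩ with rfl | hj
          · simp
          · have hj' : (j : ℕ) ≠ n := fun hc => hj (Fin.ext hc)
            rw [Function.update_of_ne hj]
            by_cases h2 : (j : ℕ) < n
            · rw [if_pos (by omega), if_pos h2]
            · rw [if_neg (by omega), if_neg h2]
        have h2 : (fun j : Fin i => if (j : ℕ) < n then g' j else g j)
            = Function.update (fun j : Fin i => if (j : ℕ) < n then g' j else g j)
                ⟨n, hn⟩ (g ⟨n, hn⟩) := by
          funext j
          rcases eq_or_ne j ⟨n, hn⟩ with rfl | hj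
          · simp
          · rw [Function.update_of_ne hj]
        rw [h1, slot_congr _ _ (h ⟨n, hn⟩).symm, ← h2, ih]
      · have heq : (fun j : Fin i => if (j : ℕ) < n + 1 then g' j else g j)
            = (fun j : Fin i => if (j : ℕ) < n then g' j else g j) := by
          funext j
          have := j.isLt
          by_cases h2 : (j : ℕ) < n
          · rw [if_pos (by omega), if_pos h2]
          · rw [if_neg (by omega), if_neg h2]
        rw [heq, ih]
  have hfin := key i
  rw [show (fun j : Fin i => if (j : ℕ) < i then g' j else g j) = g' from
    funext fun j => if_pos j.isLt] at hfin
  exact hfin.symm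

variable (G) in
/-- The image of `G^(i)` in `G ⧸ G^(i+1)`. -/
def Hsub (i : ℕ) : Subgroup (G ⧸ (⊤ : Subgroup G).lowerCentralSeries i) :=
  Subgroup.map (QuotientGroup.mk' ((⊤ : Subgroup G).lowerCentralSeries i)) ((⊤ : Subgroup G).lowerCentralSeries (i - 1))

noncomputable instance (i : ℕ) : CommGroup (Hsub G i) :=
  { (inferInstance : Group (Hsub G i)) with
    mul_comm := by
      rintro ⟨a, u, hu, rfl⟩ ⟨b, v, hv, rfl⟩
      apply Subtype.ext
      show (QuotientGroup.mk' _) u * (QuotientGroup.mk' _) v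
        = (QuotientGroup.mk' _) v * (QuotientGroup.mk' _) u
      simp only [QuotientGroup.mk'_apply]
      rw [← QuotientGroup.mk_mul, ← QuotientGroup.mk_mul]
      exact comm_in_quot i hu hv }

theorem of_surjective : Function.Surjective (Abelianization.of : G → Abelianization G) :=
  fun a => QuotientGroup.induction_on a fun g => ⟨g, rfl⟩

noncomputable def repOf (a : Abelianization G) : G := (of_surjective a).choose

theorem of_repOf (a : Abelianization G) : Abelianization.of (repOf a) = a :=
  (of_surjective a).choose_spec

variable (G) in
/-- The underlying function of the multilinear map. -/
noncomputable def MLfun (i : ℕ) (m : Fin i → Additive (Abelianization G)) :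
    Additive (Hsub G i) :=
  Additive.ofMul
    (⟨QuotientGroup.mk (nestedComm (List.ofFn fun j => repOf (Additive.toMul (m j)))),
      nestedComm (List.ofFn fun j => repOf (Additive.toMul (m j))), nested_ofFn_mem _, rfl⟩ :
      Hsub G i)

theorem MLfun_comp_update {i : ℕ} [inst : DecidableEq (Fin i)]
    (m : Fin i → Additive (Abelianization G)) (j : Fin i) (a : Additive (Abelianization G)) :
    (fun j' => repOf (Additive.toMul (Function.update m j a j')))
      = Function.update (fun j' => repOf (Additive.toMul (m j'))) j (repOf (Additive.toMul a)) := by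
  funext j'
  rcases eq_or_ne j' j with rfl | hj
  · simp
  · rw [Function.update_of_ne hj, Function.update_of_ne hj]

theorem MLfun_update_add {i : ℕ} [inst : DecidableEq (Fin i)]
    (m : Fin i → Additive (Abelianization G)) (j : Fin i)
    (x y : Additive (Abelianization G)) :
    MLfun G i (Function.update m j (x + y)) =
      MLfun G i (Function.update m j x) + MLfun G i (Function.update m j y) := by
  unfold MLfun
  rw [← ofMul_mul]
  apply congrArg Additive.ofMul
  apply Subtype.ext
  show (QuotientGroup.mk _ : G ⧸ (⊤ : Subgroup G).lowerCentralSeries i) = QuotientGroup.mk _ * QuotientGroup.mk _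
  rw [MLfun_comp_update, MLfun_comp_update, MLfun_comp_update]
  have h1 : Abelianization.of (repOf (Additive.toMul (x + y)))
      = Abelianization.of (repOf (Additive.toMul x) * repOf (Additive.toMul y)) := by
    rw [of_repOf, map_mul, of_repOf, of_repOf]; rfl
  rw [slot_congr _ j h1]
  exact slot_mul _ j _ _

variable (G) in
/-- The multilinear nested-commutator map. -/
noncomputable def ML (i : ℕ) :
    MultilinearMap ℤ (fun _ : Fin i => Additive (Abelianization G)) (Additive (Hsub G i)) where
  toFun := MLfun G i
  map_update_add' := by
    intro inst m j x y
    exact MLfun_update_add m j x y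
  map_update_smul' := by
    intro inst m j c x
    have hadd : ∀ a b : Additive (Abelianization G),
        MLfun G i (Function.update m j (a + b)) =
          MLfun G i (Function.update m j a) + MLfun G i (Function.update m j b) :=
      fun a b => MLfun_update_add m j a b
    let A : Additive (Abelianization G) →+ Additive (Hsub G i) :=
      AddMonoidHom.mk' (fun a => MLfun G i (Function.update m j a)) hadd
    show A (c • x) = c • A x
    exact map_zsmul A c x

variable (G) in
/-- The induced additive homomorphism on the tensor power. -/
noncomputable def bigF (i : ℕ) :
    (⨂[ℤ] _j : Fin i, Additive (Abelianization G)) →+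
      Additive (G ⧸ (⊤ : Subgroup G).lowerCentralSeries i) :=
  (AddMonoidHom.mk' (fun a : Additive (Hsub G i) =>
      Additive.ofMul ((Additive.toMul a : Hsub G i) : G ⧸ (⊤ : Subgroup G).lowerCentralSeries i))
    (fun a b => rfl)).comp (PiTensorProduct.lift (ML G i)).toAddMonoidHom

theorem bigF_tprod (i : ℕ) (g : Fin i → G) :
    bigF G i (PiTensorProduct.tprod ℤ fun j => Additive.ofMul (Abelianization.of (g j))) =
      Additive.ofMul (QuotientGroup.mk (nestedComm (List.ofFn g))) := by
  show Additive.ofMul ((Additive.toMul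
      (PiTensorProduct.lift (ML G i) (PiTensorProduct.tprod ℤ _)) : Hsub G i) :
        G ⧸ (⊤ : Subgroup G).lowerCentralSeries i) = _
  rw [PiTensorProduct.lift.tprod]
  apply congrArg Additive.ofMul
  show (QuotientGroup.mk (nestedComm (List.ofFn fun j =>
      repOf (Additive.toMul (Additive.ofMul (Abelianization.of (g j)))))) :
    G ⧸ (⊤ : Subgroup G).lowerCentralSeries i) = _
  exact psi_congr _ g fun j => by rw [of_repOf]; rfl

variable (G) in
/-- Values of nested commutators of length `m`. -/
def nestedSet (m : ℕ) : Set G := Set.range fun g : Fin m → G => nestedComm (List.ofFn g)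

theorem ofFn_cons {m : ℕ} (g : G) (g' : Fin m → G) :
    List.ofFn (Fin.cons g g' : Fin (m + 1) → G) = g :: List.ofFn g' := by
  rw [List.ofFn_succ]
  simp [Fin.cons_zero, Fin.cons_succ]

theorem closure_nestedSet_le (n : ℕ) :
    Subgroup.closure (nestedSet G (n + 1)) ≤ (⊤ : Subgroup G).lowerCentralSeries n := by
  rw [Subgroup.closure_le]
  rintro _ ⟨g', rfl⟩
  have := nested_ofFn_mem g'
  simpa using this

theorem lcs_le_closure_nested (n : ℕ) :
    (⊤ : Subgroup G).lowerCentralSeries n ≤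
      Subgroup.closure (nestedSet G (n + 1)) ⊔ (⊤ : Subgroup G).lowerCentralSeries (n + 1) := by
  induction n with
  | zero =>
    intro a _
    apply Subgroup.mem_sup_left
    apply Subgroup.subset_closure
    refine ⟨fun _ => a, ?_⟩
    simp [List.ofFn_succ, nestedComm]
  | succ n ih =>
    have hstep : (⊤ : Subgroup G).lowerCentralSeries (n + 1) = ⁅(⊤ : Subgroup G).lowerCentralSeries n, ⊤⁆ := rfl
    rw [hstep, Subgroup.commutator_le]
    intro x hx g _
    set C := Subgroup.closure (nestedSet G (n + 2)) with hCdef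
    -- decompose x using ih
    have hxmem := ih hx
    rw [← SetLike.mem_coe, Subgroup.mul_normal] at hxmem
    obtain ⟨c, hc, z, hz, rfl⟩ := hxmem
    have hCle := closure_nestedSet_le (G := G) n
    have hcLn : c ∈ (⊤ : Subgroup G).lowerCentralSeries n := hCle hc
    have hzLn : z ∈ (⊤ : Subgroup G).lowerCentralSeries n :=
      Subgroup.lowerCentralSeries_antitone ⊤ (Nat.le_succ n) hz
    -- key: mk ⁅g, c⁆ lies in the image of C
    have key : ∀ c' (_ : c' ∈ Subgroup.closure (nestedSet G (n + 1))),
        c' ∈ (⊤ : Subgroup G).lowerCentralSeries n ∧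
          (QuotientGroup.mk ⁅g, c'⁆ : G ⧸ (⊤ : Subgroup G).lowerCentralSeries (n + 2)) ∈
            Subgroup.map (QuotientGroup.mk' ((⊤ : Subgroup G).lowerCentralSeries (n + 2))) C := by
      intro c' hc'
      induction hc' using Subgroup.closure_induction with
      | mem w hw =>
        obtain ⟨g', rfl⟩ := hw
        constructor
        · simpa using nested_ofFn_mem g'
        · have hne : List.ofFn g' ≠ [] := fun h => by simpa using congrArg List.length h
          have : ⁅g, nestedComm (List.ofFn g')⁆ = nestedComm (List.ofFn (Fin.cons g g')) := by
            rw [ofFn_cons, nestedComm_cons' _ hne]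
          rw [this]
          exact ⟨_, Subgroup.subset_closure ⟨Fin.cons g g', rfl⟩, rfl⟩
      | one =>
        refine ⟨one_mem _, ?_⟩
        rw [commutatorElement_one_right]
        exact one_mem _
      | mul a b _ _ ha hb =>
        refine ⟨mul_mem ha.1 hb.1, ?_⟩
        rw [mk_comm_mul_right n g ha.1 hb.1]
        exact mul_mem ha.2 hb.2
      | inv a _ ha =>
        refine ⟨inv_mem ha.1, ?_⟩
        have h1 := mk_comm_mul_right n g (inv_mem ha.1) ha.1
        rw [inv_mul_cancel, commutatorElement_one_right] at h1
        have h2 : (QuotientGroup.mk ⁅g, a⁻¹⁆ : G ⧸ (⊤ : Subgroup G).lowerCentralSeries (n + 2)) =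
            (QuotientGroup.mk ⁅g, a⁆)⁻¹ := by
          rw [eq_inv_iff_mul_eq_one, ← h1]; rfl
        rw [h2]
        exact inv_mem ha.2
    -- now compute mk ⁅g, c * z⁆
    have hmain : (QuotientGroup.mk ⁅g, c * z⁆ : G ⧸ (⊤ : Subgroup G).lowerCentralSeries (n + 2)) ∈
        Subgroup.map (QuotientGroup.mk' ((⊤ : Subgroup G).lowerCentralSeries (n + 2))) C := by
      rw [mk_comm_mul_right n g hcLn hzLn, mk_comm_deep n g hz, mul_one]
      exact (key c hc).2
    obtain ⟨c₂, hc₂, hmk⟩ := hmain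
    have hrem : c₂⁻¹ * ⁅g, c * z⁆ ∈ (⊤ : Subgroup G).lowerCentralSeries (n + 2) :=
      (QuotientGroup.eq (s := (⊤ : Subgroup G).lowerCentralSeries (n + 2))).mp hmk
    have hdecomp : ⁅g, c * z⁆ = c₂ * (c₂⁻¹ * ⁅g, c * z⁆) := by group
    have hmem2 : ⁅g, c * z⁆ ∈ C ⊔ (⊤ : Subgroup G).lowerCentralSeries (n + 2) := by
      rw [hdecomp]
      exact mul_mem (Subgroup.mem_sup_left hc₂) (Subgroup.mem_sup_right hrem)
    have : ⁅c * z, g⁆ = ⁅g, c * z⁆⁻¹ := (commutatorElement_inv _ _).symm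
    rw [this]
    exact inv_mem hmem2

end NestedAux

open NestedAux in
/-- Let `G` be a group and `i ≥ 1`, with `G^(i) = (⊤ : Subgroup G).lowerCentralSeries (i-1)`.
There is a surjective group homomorphism from the `i`-fold tensor power `(G^{ab})^{⊗ i}`
(over `ℤ`, with `G^{ab}` written additively) onto `G^(i)/G^(i+1)` (realised as the image of
`G^(i)` in `G ⧸ G^(i+1)`, written additively), induced by the multilinear map sending
`(g₁, …, g_i)` to the class of the nested commutator `⁅g₁, ⁅g₂, …, ⁅g_{i-1}, g_i⁆…⁆⁆`. -/
theorem tensor_power_surjects_onto_lcs_quotient {G : Type*} [Group G] (i : ℕ) (hi : 1 ≤ i) :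
    ∃ f : (⨂[ℤ] _j : Fin i, Additive (Abelianization G)) →+
        Additive (G ⧸ (⊤ : Subgroup G).lowerCentralSeries i),
      (∀ g : Fin i → G,
        f (PiTensorProduct.tprod ℤ fun j => Additive.ofMul (Abelianization.of (g j))) =
          Additive.ofMul (QuotientGroup.mk (nestedComm (List.ofFn g)))) ∧
      (∀ y : G ⧸ (⊤ : Subgroup G).lowerCentralSeries i,
        (∃ t, f t = Additive.ofMul y) ↔
          y ∈ Subgroup.map (QuotientGroup.mk' ((⊤ : Subgroup G).lowerCentralSeries i))
            ((⊤ : Subgroup G).lowerCentralSeries (i - 1))) := by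
  classical
  refine ⟨bigF G i, fun g => bigF_tprod i g, fun y => ⟨?_, ?_⟩⟩
  · rintro ⟨t, ht⟩
    have h2 : y = ((Additive.toMul (PiTensorProduct.lift (ML G i) t) : Hsub G i) :
        G ⧸ (⊤ : Subgroup G).lowerCentralSeries i) := by
      exact (congrArg Additive.toMul ht).symm
    rw [h2]
    show _ ∈ Hsub G i
    exact SetLike.coe_mem _
  · rintro ⟨x, hx, rfl⟩
    have hdec := lcs_le_closure_nested (G := G) (i - 1) hx
    have hi1 : i - 1 + 1 = i := by omega
    rw [hi1] at hdec
    rw [← SetLike.mem_coe, Subgroup.mul_normal] at hdec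
    obtain ⟨c, hc, z, hz, rfl⟩ := hdec
    have hmkz : (QuotientGroup.mk z : G ⧸ (⊤ : Subgroup G).lowerCentralSeries i) = 1 :=
      (QuotientGroup.eq_one_iff _).mpr hz
    have key : ∀ c' (_ : c' ∈ Subgroup.closure (nestedSet G i)),
        ∃ t, bigF G i t =
          Additive.ofMul (QuotientGroup.mk c' : G ⧸ (⊤ : Subgroup G).lowerCentralSeries i) := by
      intro c' hc'
      induction hc' using Subgroup.closure_induction with
      | mem w hw =>
        obtain ⟨g, rfl⟩ := hw
        exact ⟨_, bigF_tprod i g⟩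
      | one =>
        exact ⟨0, by rw [map_zero, QuotientGroup.mk_one, ofMul_one]⟩
      | mul a b _ _ ha hb =>
        obtain ⟨t1, h1⟩ := ha
        obtain ⟨t2, h2⟩ := hb
        exact ⟨t1 + t2, by rw [map_add, h1, h2, ← ofMul_mul, ← QuotientGroup.mk_mul]⟩
      | inv a _ ha =>
        obtain ⟨t1, h1⟩ := ha
        exact ⟨-t1, by rw [map_neg, h1, ← ofMul_inv, ← QuotientGroup.mk_inv]⟩
    obtain ⟨t, ht⟩ := key c hc
    refine ⟨t, ?_⟩
    rw [ht]
    show Additive.ofMul (QuotientGroup.mk c : G ⧸ (⊤ : Subgroup G).lowerCentralSeries i) =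
      Additive.ofMul (QuotientGroup.mk (c * z) : G ⧸ (⊤ : Subgroup G).lowerCentralSeries i)
    rw [QuotientGroup.mk_mul, hmkz, mul_one]
end

section
/- Let c ≥ 1 and s ≥ 2 be integers. There exists a constant C = C(c, s) such that for every finite nilpotent group G of nilpotency class at most c and every symmetric generating set S ⊂ G of size s, diam(Γ(G, S)) ≤ diam(Γ(G^{ab}, S̄)) + C · √(diam(Γ(G^{ab}, S̄))), where S̄ is the image of S in G^{ab}. -/
/-- The diameter of the Cayley graph `Γ(G, S)`. -/
noncomputable def cayleyDiam {G : Type*} [Group G] (S : Set G) : ℕ :=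
  subDiam S Set.univ

namespace CayleyAux

open Subgroup
open scoped commutatorElement
open scoped IsMulCommutative

variable {G : Type*} [Group G]

/-! ### Words -/

/-- `g` is a product of at most `n` elements of `S`. -/
def HasWord (S : Set G) (g : G) (n : ℕ) : Prop :=
  ∃ l : List G, (∀ x ∈ l, x ∈ S) ∧ l.length ≤ n ∧ l.prod = g

theorem HasWord.mono {S : Set G} {g : G} {n m : ℕ} (h : HasWord S g n) (hnm : n ≤ m) :
    HasWord S g m := by
  obtain ⟨l, h1, h2, h3⟩ := h
  exact ⟨l, h1, h2.trans hnm, h3⟩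

theorem hasWord_one (S : Set G) : HasWord S 1 0 :=
  ⟨[], by simp, by simp, by simp⟩

theorem hasWord_mem {S : Set G} {a : G} (ha : a ∈ S) : HasWord S a 1 :=
  ⟨[a], by simpa using ha, by simp, by simp⟩

theorem HasWord.mul {S : Set G} {g h : G} {n m : ℕ} (hg : HasWord S g n) (hh : HasWord S h m) :
    HasWord S (g * h) (n + m) := by
  obtain ⟨l1, a1, b1, c1⟩ := hg
  obtain ⟨l2, a2, b2, c2⟩ := hh
  refine ⟨l1 ++ l2, ?_, ?_, ?_⟩
  · intro x hx; rcases List.mem_append.1 hx with h | h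
    · exact a1 x h
    · exact a2 x h
  · simpa using Nat.add_le_add b1 b2
  · simp [c1, c2]

theorem HasWord.inv {S : Set G} (hsym : ∀ x ∈ S, x⁻¹ ∈ S) {g : G} {n : ℕ}
    (hg : HasWord S g n) : HasWord S g⁻¹ n := by
  obtain ⟨l, a, b, c⟩ := hg
  refine ⟨(l.map fun x => x⁻¹).reverse, ?_, ?_, ?_⟩
  · intro x hx
    simp only [List.mem_reverse, List.mem_map] at hx
    obtain ⟨y, hy, rfl⟩ := hx
    exact hsym y (a y hy)
  · simpa using b
  · rw [← List.prod_inv_reverse, c]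

theorem HasWord.pow {S : Set G} {g : G} {n : ℕ} (hg : HasWord S g n) (k : ℕ) :
    HasWord S (g ^ k) (k * n) := by
  induction k with
  | zero => simpa using hasWord_one S
  | succ k ih =>
      have := ih.mul hg
      rw [← pow_succ] at this
      exact this.mono (by ring_nf; omega)

theorem HasWord.commutator {S : Set G} (hsym : ∀ x ∈ S, x⁻¹ ∈ S) {g h : G} {n m : ℕ}
    (hg : HasWord S g n) (hh : HasWord S h m) : HasWord S ⁅g, h⁆ (2 * (n + m)) := by
  have := ((hg.mul hh).mul (hg.inv hsym)).mul (hh.inv hsym)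
  rw [show g * h * g⁻¹ * h⁻¹ = ⁅g, h⁆ from (commutatorElement_def g h).symm] at this
  exact this.mono (by omega)

theorem HasWord.listProd {S : Set G} {L : List G} {n : ℕ}
    (h : ∀ x ∈ L, HasWord S x n) : HasWord S L.prod (L.length * n) := by
  induction L with
  | nil => simpa using hasWord_one S
  | cons a t ih =>
      have ha := h a (by simp)
      have ht := ih fun x hx => h x (List.mem_cons_of_mem _ hx)
      have := ha.mul ht
      rw [List.prod_cons]
      exact (ha.mul ht).mono (by simp [List.length_cons]; ring_nf; omega)

/-! ### wordLength and cayleyDiam -/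

theorem wordLength_le_of_hasWord {S : Set G} {g : G} {n : ℕ} (h : HasWord S g n) :
    wordLength S g ≤ n := by
  obtain ⟨l, a, b, c⟩ := h
  exact le_trans (Nat.sInf_le ⟨l, a, rfl, c⟩) b

theorem exists_word_of_mem_closure {S : Set G} (hsym : ∀ x ∈ S, x⁻¹ ∈ S) {g : G}
    (hg : g ∈ Subgroup.closure S) : ∃ l : List G, (∀ x ∈ l, x ∈ S) ∧ l.prod = g := by
  induction hg using Subgroup.closure_induction with
  | mem x hx => exact ⟨[x], by simpa using hx, by simp⟩
  | one => exact ⟨[], by simp, by simp⟩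
  | mul x y hx hy ihx ihy =>
      obtain ⟨l1, a1, c1⟩ := ihx
      obtain ⟨l2, a2, c2⟩ := ihy
      refine ⟨l1 ++ l2, ?_, by simp [c1, c2]⟩
      intro z hz; rcases List.mem_append.1 hz with h | h
      · exact a1 z h
      · exact a2 z h
  | inv x hx ihx =>
      obtain ⟨l, a, c⟩ := ihx
      refine ⟨(l.map fun x => x⁻¹).reverse, ?_, ?_⟩
      · intro z hz
        simp only [List.mem_reverse, List.mem_map] at hz
        obtain ⟨y, hy, rfl⟩ := hz
        exact hsym y (a y hy)
      · rw [← List.prod_inv_reverse, c]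

theorem hasWord_wordLength {S : Set G} (hsym : ∀ x ∈ S, x⁻¹ ∈ S)
    (hgen : Subgroup.closure S = ⊤) (g : G) : HasWord S g (wordLength S g) := by
  have hne : {n | ∃ l : List G, (∀ x ∈ l, x ∈ S) ∧ l.length = n ∧ l.prod = g}.Nonempty := by
    obtain ⟨l, a, c⟩ := exists_word_of_mem_closure hsym (hgen ▸ Subgroup.mem_top g)
    exact ⟨l.length, l, a, rfl, c⟩
  obtain ⟨l, a, b, c⟩ := Nat.sInf_mem hne
  exact ⟨l, a, b.le, c⟩

theorem wordLength_le_cayleyDiam [Finite G] (S : Set G) (g : G) :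
    wordLength S g ≤ cayleyDiam S := by
  have hsub : {n | ∃ h₁ ∈ (Set.univ : Set G), ∃ h₂ ∈ (Set.univ : Set G),
      wordLength S (h₁⁻¹ * h₂) = n} ⊆ Set.range fun p : G × G => wordLength S (p.1⁻¹ * p.2) := by
    rintro n ⟨h₁, -, h₂, -, rfl⟩
    exact ⟨(h₁, h₂), rfl⟩
  apply le_csSup (((Set.finite_range _).subset hsub).bddAbove)
  exact ⟨1, trivial, g, trivial, by rw [inv_one, one_mul]⟩

theorem cayleyDiam_le (S : Set G) {n : ℕ} (h : ∀ g : G, wordLength S g ≤ n) :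
    cayleyDiam S ≤ n := by
  refine csSup_le ⟨wordLength S (1⁻¹ * 1), ⟨1, trivial, 1, trivial, rfl⟩⟩ ?_
  rintro m ⟨h₁, -, h₂, -, rfl⟩
  exact h _

/-! ### Commutator identities -/

/-- `z` commutes with everything. -/
def Central (z : G) : Prop := ∀ x : G, Commute x z

theorem Central.conj_eq {z : G} (hz : Central z) (u : G) : u * z * u⁻¹ = z := by
  rw [(hz u).eq]; group

theorem Central.inv {z : G} (hz : Central z) : Central z⁻¹ := fun x => (hz x).inv_right

theorem central_one : Central (1 : G) := fun x => Commute.one_right x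

theorem fs_mul {u v y : G} (hv : Central ⁅v, y⁆) : ⁅u * v, y⁆ = ⁅u, y⁆ * ⁅v, y⁆ := by
  have h1 : ⁅u * v, y⁆ = u * ⁅v, y⁆ * u⁻¹ * ⁅u, y⁆ := by group
  rw [h1, hv.conj_eq u, (hv ⁅u, y⁆).eq]

theorem fs_inv {u y : G} (hu : Central ⁅u, y⁆) : ⁅u⁻¹, y⁆ = ⁅u, y⁆⁻¹ := by
  have h1 : ⁅u⁻¹, y⁆ = u⁻¹ * ⁅u, y⁆⁻¹ * u := by group
  rw [h1]
  simpa using hu.inv.conj_eq u⁻¹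

theorem ss_mul {u g h : G} (hc : Central ⁅u, h⁆) : ⁅u, g * h⁆ = ⁅u, g⁆ * ⁅u, h⁆ := by
  have h1 : ⁅u, g * h⁆ = ⁅u, g⁆ * (g * ⁅u, h⁆ * g⁻¹) := by group
  rw [h1, hc.conj_eq g]

/-- The map `g ↦ ⁅u, g⁆`, as a monoid hom, when all its values are central. -/
def commHom (u : G) (hc : ∀ g : G, Central ⁅u, g⁆) : G →* G :=
  MonoidHom.mk' (fun g => ⁅u, g⁆) fun g h => ss_mul (hc h)

@[simp] theorem commHom_apply (u : G) (hc : ∀ g : G, Central ⁅u, g⁆) (g : G) :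
    commHom u hc g = ⁅u, g⁆ := rfl

theorem commHom_eq_one_of_mem {u : G} (hc : ∀ g : G, Central ⁅u, g⁆) {x : G}
    (hx : x ∈ (⊤ : Subgroup G).lowerCentralSeries 1) : commHom u hc x = 1 := by
  have : (⊤ : Subgroup G).lowerCentralSeries 1 ≤ (commHom u hc).ker := by
    rw [top_lowerCentralSeries_one, _root_.commutator_def, Subgroup.commutator_le]
    intro g₁ _ g₂ _
    rw [MonoidHom.mem_ker, map_commutatorElement]
    exact commutatorElement_eq_one_iff_commute.2 (hc g₂ (commHom u hc g₁)).symm.symm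
  exact this hx

/-! ### Lower central series basics -/

theorem comm_mem_lcs_succ {u : G} {n : ℕ} (hu : u ∈ (⊤ : Subgroup G).lowerCentralSeries n) (g : G) :
    ⁅u, g⁆ ∈ (⊤ : Subgroup G).lowerCentralSeries (n + 1) := by
  rw [Subgroup.lowerCentralSeries_succ]
  exact Subgroup.commutator_mem_commutator hu (Subgroup.mem_top g)

theorem lcs_map {H : Type*} [Group H] (f : G →* H) (n : ℕ) {u : G}
    (hu : u ∈ (⊤ : Subgroup G).lowerCentralSeries n) : f u ∈ (⊤ : Subgroup H).lowerCentralSeries n := by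
  induction n generalizing u with
  | zero => exact Subgroup.mem_top _
  | succ n ih =>
      rw [Subgroup.lowerCentralSeries_succ] at hu ⊢
      have hle : ⁅(⊤ : Subgroup G).lowerCentralSeries n, (⊤ : Subgroup G)⁆ ≤
          Subgroup.comap f ⁅(⊤ : Subgroup H).lowerCentralSeries n, (⊤ : Subgroup H)⁆ := by
        rw [Subgroup.commutator_le]
        intro g₁ h₁ g₂ _
        rw [Subgroup.mem_comap, map_commutatorElement]
        exact Subgroup.commutator_mem_commutator (ih h₁) (Subgroup.mem_top _)
      exact hle hu

theorem lcs_surj {H : Type*} [Group H] (f : G →* H) (hf : Function.Surjective f) (n : ℕ) :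
    ∀ q ∈ (⊤ : Subgroup H).lowerCentralSeries n, ∃ g ∈ (⊤ : Subgroup G).lowerCentralSeries n, f g = q := by
  induction n with
  | zero => exact fun q _ => (hf q).imp fun g hg => ⟨Subgroup.mem_top g, hg⟩
  | succ n ih =>
      intro q hq
      rw [Subgroup.lowerCentralSeries_succ] at hq
      induction hq using Subgroup.closure_induction with
      | mem x hx =>
          obtain ⟨q₁, hq₁, q₂, -, rfl⟩ := hx
          obtain ⟨g₁, hg₁, rfl⟩ := ih q₁ hq₁
          obtain ⟨g₂, rfl⟩ := hf q₂
          refine ⟨⁅g₁, g₂⁆, comm_mem_lcs_succ hg₁ g₂, ?_⟩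
          simp [commutatorElement_def]
      | one => exact ⟨1, Subgroup.one_mem _, map_one f⟩
      | mul x y hx hy ihx ihy =>
          obtain ⟨g, hg, rfl⟩ := ihx
          obtain ⟨g', hg', rfl⟩ := ihy
          exact ⟨g * g', Subgroup.mul_mem _ hg hg', map_mul f g g'⟩
      | inv x hx ihx =>
          obtain ⟨g, hg, rfl⟩ := ihx
          exact ⟨g⁻¹, Subgroup.inv_mem _ hg, map_inv f g⟩

/-- All of `(⊤ : Subgroup G).lowerCentralSeries m` is trivial. -/
def TrivAt (G : Type*) [Group G] (m : ℕ) : Prop :=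
  ∀ x ∈ (⊤ : Subgroup G).lowerCentralSeries m, x = 1

theorem TrivAt.central {m : ℕ} (ht : TrivAt G (m + 1)) {x : G}
    (hx : x ∈ (⊤ : Subgroup G).lowerCentralSeries m) : Central x := fun y => by
  have h1 : ⁅x, y⁆ = 1 := ht _ (comm_mem_lcs_succ hx y)
  exact (commutatorElement_eq_one_iff_commute.1 h1).symm

theorem TrivAt.mem_center {m : ℕ} (ht : TrivAt G (m + 1)) {x : G}
    (hx : x ∈ (⊤ : Subgroup G).lowerCentralSeries m) : x ∈ Subgroup.center G :=
  Subgroup.mem_center_iff.2 fun g => (ht.central hx g).eq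

theorem trivAt_quotient (m : ℕ) : TrivAt (G ⧸ (⊤ : Subgroup G).lowerCentralSeries m) m := by
  intro q hq
  obtain ⟨g, hg, rfl⟩ := lcs_surj (QuotientGroup.mk' ((⊤ : Subgroup G).lowerCentralSeries m))
    (QuotientGroup.mk'_surjective _) m q hq
  exact (QuotientGroup.eq_one_iff g).2 hg

theorem of_eq_one_iff (x : G) :
    Abelianization.of x = 1 ↔ x ∈ (⊤ : Subgroup G).lowerCentralSeries 1 := by
  rw [top_lowerCentralSeries_one]
  exact QuotientGroup.eq_one_iff x

/-! ### The finite sets of basic commutators -/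

variable [DecidableEq G]

/-- `RF SF j` : basic left-normed commutators of weight `j+1` in the elements of `SF`. -/
def RF (SF : Finset G) : ℕ → Finset G
  | 0 => SF
  | j + 1 => ((RF SF j) ×ˢ SF).image fun p => ⁅p.1, p.2⁆

theorem RF_card (SF : Finset G) (j : ℕ) : (RF SF j).card ≤ SF.card ^ (j + 1) := by
  induction j with
  | zero => simpa [RF] using Nat.le_refl _
  | succ j ih =>
      calc (RF SF (j + 1)).card ≤ ((RF SF j) ×ˢ SF).card := Finset.card_image_le
        _ = (RF SF j).card * SF.card := Finset.card_product _ _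
        _ ≤ SF.card ^ (j + 1) * SF.card := Nat.mul_le_mul_right _ ih
        _ = SF.card ^ (j + 2) := by ring

theorem RF_mem_lcs (SF : Finset G) (j : ℕ) {ρ : G} (hρ : ρ ∈ RF SF j) :
    ρ ∈ (⊤ : Subgroup G).lowerCentralSeries j := by
  induction j generalizing ρ with
  | zero => exact Subgroup.mem_top ρ
  | succ j ih =>
      obtain ⟨p, hp, rfl⟩ := Finset.mem_image.1 hρ
      obtain ⟨h1, h2⟩ := Finset.mem_product.1 hp
      exact comm_mem_lcs_succ (ih h1) p.2

theorem RF_hasWord {S : Set G} {SF : Finset G} (hsym : ∀ x ∈ S, x⁻¹ ∈ S)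
    (hsub : ∀ x ∈ SF, x ∈ S) (j : ℕ) {ρ : G} (hρ : ρ ∈ RF SF j) :
    HasWord S ρ (4 ^ (j + 1)) := by
  induction j generalizing ρ with
  | zero => exact (hasWord_mem (hsub ρ hρ)).mono (by norm_num)
  | succ j ih =>
      obtain ⟨p, hp, rfl⟩ := Finset.mem_image.1 hρ
      obtain ⟨h1, h2⟩ := Finset.mem_product.1 hp
      have := (ih h1).commutator hsym (hasWord_mem (hsub p.2 h2))
      refine this.mono ?_
      have h4 : (1 : ℕ) ≤ 4 ^ (j + 1) := Nat.one_le_pow _ _ (by norm_num)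
      calc 2 * (4 ^ (j + 1) + 1) ≤ 2 * (4 ^ (j + 1) + 4 ^ (j + 1)) := by omega
        _ = 4 ^ (j + 1) * 4 := by ring
        _ = 4 ^ (j + 2) := by ring

theorem RF_destruct (SF : Finset G) (j : ℕ) {ρ : G} (hρ : ρ ∈ RF SF (j + 1)) :
    ∃ ρ₂ ∈ RF SF j, ∃ b ∈ SF, ρ = ⁅ρ₂, b⁆ := by
  obtain ⟨p, hp, rfl⟩ := Finset.mem_image.1 hρ
  obtain ⟨h1, h2⟩ := Finset.mem_product.1 hp
  exact ⟨p.1, h1, p.2, h2, rfl⟩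

theorem RF_image {H : Type*} [Group H] [DecidableEq H] (f : G →* H) (SF : Finset G) (j : ℕ) :
    RF (SF.image f) j = (RF SF j).image f := by
  induction j with
  | zero => rfl
  | succ j ih =>
      ext x
      simp only [RF, ih, Finset.mem_image, Finset.mem_product, Prod.exists]
      constructor
      · rintro ⟨a, b, ⟨⟨ρ, hρ, rfl⟩, ⟨s, hs, rfl⟩⟩, rfl⟩
        exact ⟨⁅ρ, s⁆, ⟨ρ, s, ⟨hρ, hs⟩, rfl⟩, map_commutatorElement f ρ s⟩
      · rintro ⟨y, ⟨ρ, s, ⟨hρ, hs⟩, rfl⟩, rfl⟩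
        exact ⟨f ρ, f s, ⟨⟨ρ, hρ, rfl⟩, ⟨s, hs, rfl⟩⟩, (map_commutatorElement f ρ s).symm⟩



/-! ### Center-valued bookkeeping -/

open scoped Classical in
/-- `x` as an element of the center (junk value `1` if `x` is not central). -/
noncomputable def ctrOf (x : G) : Subgroup.center G :=
  if h : x ∈ Subgroup.center G then ⟨x, h⟩ else 1

theorem ctrOf_coe {x : G} (h : x ∈ Subgroup.center G) :
    ((ctrOf x : Subgroup.center G) : G) = x := by
  simp [ctrOf, h]

theorem merge_list [DecidableEq G] (T : Finset G) :
    ∀ l : List (G × ℤ), (∀ p ∈ l, p.1 ∈ T) → (∀ p ∈ l, p.1 ∈ Subgroup.center G) →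
      ∃ M : G → ℤ, (l.map fun p => p.1 ^ p.2).prod =
        ((∏ ρ ∈ T, ctrOf ρ ^ M ρ : Subgroup.center G) : G)
  | [] => fun _ _ => ⟨0, by simp⟩
  | p :: l => fun h1 h2 => by
      obtain ⟨M, hM⟩ := merge_list T l (fun q hq => h1 q (List.mem_cons_of_mem _ hq))
        (fun q hq => h2 q (List.mem_cons_of_mem _ hq))
      have hp1 : p.1 ∈ T := h1 p (List.mem_cons_self)
      have hpc : p.1 ∈ Subgroup.center G := h2 p (List.mem_cons_self)
      refine ⟨fun ρ => (if ρ = p.1 then p.2 else 0) + M ρ, ?_⟩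
      have key : (∏ ρ ∈ T, ctrOf ρ ^ ((if ρ = p.1 then p.2 else 0) + M ρ) : Subgroup.center G)
          = ctrOf p.1 ^ p.2 * ∏ ρ ∈ T, ctrOf ρ ^ M ρ := by
        simp_rw [zpow_add]
        rw [Finset.prod_mul_distrib]
        congr 1
        rw [Finset.prod_eq_single_of_mem p.1 hp1]
        · simp
        · intro ρ _ hne; simp [hne]
      rw [List.map_cons, List.prod_cons, hM, key]
      push_cast
      rw [ctrOf_coe hpc]

theorem abrep {SF : Finset G} [DecidableEq G] (hcl : Subgroup.closure (SF : Set G) = ⊤)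
    (y : G) : ∃ e : G → ℤ, Abelianization.of y = ∏ t ∈ SF, Abelianization.of t ^ e t := by
  have hy : y ∈ Subgroup.closure (SF : Set G) := hcl ▸ Subgroup.mem_top y
  induction hy using Subgroup.closure_induction with
  | mem x hx =>
      refine ⟨fun t => if t = x then 1 else 0, ?_⟩
      rw [Finset.prod_eq_single_of_mem x (Finset.mem_coe.1 hx)]
      · simp
      · intro t _ hne; simp [hne]
  | one => exact ⟨0, by simp⟩
  | mul a b _ _ iha ihb =>
      obtain ⟨e1, h1⟩ := iha; obtain ⟨e2, h2⟩ := ihb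
      refine ⟨e1 + e2, ?_⟩
      rw [map_mul, h1, h2, ← Finset.prod_mul_distrib]
      simp [zpow_add]
  | inv a _ iha =>
      obtain ⟨e1, h1⟩ := iha
      refine ⟨-e1, ?_⟩
      rw [map_inv, h1, ← Finset.prod_inv_distrib]
      simp [zpow_neg]

theorem listProd_toList {M : Type*} [CommMonoid M] {α : Type*} (s : Finset α) (f : α → M) :
    (s.toList.map f).prod = ∏ a ∈ s, f a := by
  rw [Finset.prod_eq_multiset_prod, ← Finset.coe_toList s, Multiset.map_coe,
    Multiset.prod_coe]

/-! ### first-slot power identities -/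

theorem fs_pow {u y : G} (hc : Central ⁅u, y⁆) : ∀ n : ℕ, ⁅u ^ n, y⁆ = ⁅u, y⁆ ^ n
  | 0 => by simp
  | n + 1 => by rw [pow_succ, fs_mul hc, fs_pow hc n, pow_succ]

theorem fs_zpow {u y : G} (hc : Central ⁅u, y⁆) (hcp : ∀ k : ℕ, Central ⁅u ^ k, y⁆) :
    ∀ n : ℤ, ⁅u ^ n, y⁆ = ⁅u, y⁆ ^ n
  | Int.ofNat k => by rw [Int.ofNat_eq_coe, zpow_natCast, zpow_natCast, fs_pow hc]
  | Int.negSucc k => by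
      rw [zpow_negSucc, zpow_negSucc, fs_inv (hcp (k + 1)), fs_pow hc]

theorem fs_listprod {J : ℕ} (hc : ∀ w ∈ (⊤ : Subgroup G).lowerCentralSeries (J + 1), Central w) (y : G) :
    ∀ l : List G, (∀ x ∈ l, x ∈ (⊤ : Subgroup G).lowerCentralSeries J) →
      ⁅l.prod, y⁆ = (l.map fun x => ⁅x, y⁆).prod
  | [] => fun _ => by simp
  | a :: t => fun hl => by
      have ht : ∀ x ∈ t, x ∈ (⊤ : Subgroup G).lowerCentralSeries J :=
        fun x hx => hl x (List.mem_cons_of_mem _ hx)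
      have hcentr : Central ⁅t.prod, y⁆ :=
        hc _ (comm_mem_lcs_succ (Subgroup.list_prod_mem _ ht) y)
      rw [List.prod_cons, fs_mul hcentr, fs_listprod hc y t ht, List.map_cons,
        List.prod_cons]

theorem RF_mem_step [DecidableEq G] {SF : Finset G} {J : ℕ} {ρ t : G}
    (hρ : ρ ∈ RF SF J) (ht : t ∈ SF) : ⁅ρ, t⁆ ∈ RF SF (J + 1) :=
  Finset.mem_image.2 ⟨(ρ, t), Finset.mem_product.2 ⟨hρ, ht⟩, rfl⟩

/-! ### The span theorem -/

theorem spanExact : ∀ (J : ℕ) {H : Type} [Group H] [DecidableEq H] (SF : Finset H),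
    Subgroup.closure (SF : Set H) = ⊤ → TrivAt H (J + 1) →
    ∀ u ∈ (⊤ : Subgroup H).lowerCentralSeries J, ∃ m : H → ℤ,
      u = ((∏ ρ ∈ RF SF J, ctrOf ρ ^ m ρ : Subgroup.center H) : H) := by
  intro J
  induction J with
  | zero =>
      intro H _ _ SF hcl htriv u hu0
      clear hu0
      have hu : u ∈ Subgroup.closure (SF : Set H) := hcl ▸ Subgroup.mem_top u
      induction hu using Subgroup.closure_induction with
      | mem x hx =>
          refine ⟨fun ρ => if ρ = x then 1 else 0, ?_⟩
          have key : (∏ ρ ∈ RF SF 0, ctrOf ρ ^ (if ρ = x then (1 : ℤ) else 0) :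
              Subgroup.center H) = ctrOf x := by
            rw [show RF SF 0 = SF from rfl,
              Finset.prod_eq_single_of_mem x (Finset.mem_coe.1 hx)]
            · simp
            · intro t _ hne; simp [hne]
          rw [key, ctrOf_coe (htriv.mem_center (Subgroup.mem_top x))]
      | one => exact ⟨0, by simp⟩
      | mul a b _ _ iha ihb =>
          obtain ⟨m1, h1⟩ := iha; obtain ⟨m2, h2⟩ := ihb
          refine ⟨m1 + m2, ?_⟩
          rw [h1, h2, ← Subgroup.coe_mul, ← Finset.prod_mul_distrib]
          simp [zpow_add]
      | inv a _ iha =>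
          obtain ⟨m1, h1⟩ := iha
          refine ⟨-m1, ?_⟩
          rw [h1, ← Subgroup.coe_inv, ← Finset.prod_inv_distrib]
          simp [zpow_neg]
  | succ J ih =>
      intro H _ _ SF hcl htriv u hu
      -- the quotient by the next step of the lower central series
      set N := (⊤ : Subgroup H).lowerCentralSeries (J + 1) with hN
      let π : H →* H ⧸ N := QuotientGroup.mk' N
      letI : DecidableEq (H ⧸ N) := Classical.decEq _
      have hπs : Function.Surjective π := QuotientGroup.mk'_surjective N
      have htrivQ : TrivAt (H ⧸ N) (J + 1) := trivAt_quotient (J + 1)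
      have hclQ : Subgroup.closure ((SF.image π : Finset (H ⧸ N)) : Set (H ⧸ N)) = ⊤ := by
        rw [Finset.coe_image, ← MonoidHom.map_closure, hcl]
        exact Subgroup.map_top_of_surjective π hπs
      -- representation of elements of `lcs J` modulo `N`
      have spanMod : ∀ a ∈ (⊤ : Subgroup H).lowerCentralSeries J, ∃ L : List (H × ℤ),
          (∀ p ∈ L, p.1 ∈ RF SF J) ∧ (L.map fun p => p.1 ^ p.2).prod⁻¹ * a ∈ N := by
        intro a ha
        obtain ⟨m, hm⟩ := ih (SF.image π) hclQ htrivQ (π a) (lcs_map π J ha)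
        rw [RF_image π SF J] at hm
        have lift : ∀ T : Finset (H ⧸ N), T ⊆ (RF SF J).image π → ∃ L : List (H × ℤ),
            (∀ p ∈ L, p.1 ∈ RF SF J) ∧
            π (L.map fun p => p.1 ^ p.2).prod =
              ((∏ ρ ∈ T, ctrOf ρ ^ m ρ : Subgroup.center (H ⧸ N)) : H ⧸ N) := by
          intro T
          induction T using Finset.induction_on with
          | empty => exact fun _ => ⟨[], by simp, by simp⟩
          | @insert ρ' T hρ' ihT =>
              intro hsub
              obtain ⟨L, hL1, hL2⟩ := ihT fun x hx => hsub (Finset.mem_insert_of_mem hx)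
              obtain ⟨ρ, hρ, rfl⟩ := Finset.mem_image.1 (hsub (Finset.mem_insert_self _ _))
              refine ⟨(ρ, m (π ρ)) :: L, ?_, ?_⟩
              · intro p hp
                rcases List.mem_cons.1 hp with rfl | h
                · exact hρ
                · exact hL1 _ h
              · have hcρ : π ρ ∈ Subgroup.center (H ⧸ N) :=
                  htrivQ.mem_center (lcs_map π J (RF_mem_lcs SF J hρ))
                rw [List.map_cons, List.prod_cons, map_mul, hL2,
                  Finset.prod_insert hρ']
                push_cast
                rw [ctrOf_coe hcρ, map_zpow]
        obtain ⟨L, hL1, hL2⟩ := lift _ (subset_refl _)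
        refine ⟨L, hL1, ?_⟩
        have hone : π ((L.map fun p => p.1 ^ p.2).prod⁻¹ * a) = 1 := by
          rw [map_mul, map_inv, hL2, ← hm]
          all_goals group
        exact (QuotientGroup.eq_one_iff _).1 hone
      -- expansion of a single bracket ⁅ρ ^ n, y⁆ into weight-(J+2) commutators
      have expand : ∀ (y ρ : H), ρ ∈ RF SF J → ∀ n : ℤ, ∃ l2 : List (H × ℤ),
          (∀ q ∈ l2, q.1 ∈ RF SF (J + 1)) ∧
          ⁅ρ ^ n, y⁆ = (l2.map fun q => q.1 ^ q.2).prod := by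
        intro y ρ hρ n
        have hρl : ρ ∈ (⊤ : Subgroup H).lowerCentralSeries J := RF_mem_lcs SF J hρ
        have hcv : ∀ g : H, Central ⁅ρ, g⁆ :=
          fun g => htriv.central (comm_mem_lcs_succ hρl g)
        have hcp : ∀ k : ℕ, Central ⁅ρ ^ k, y⁆ :=
          fun k => htriv.central (comm_mem_lcs_succ (Subgroup.pow_mem _ hρl k) y)
        have h1 : ⁅ρ ^ n, y⁆ = ⁅ρ, y⁆ ^ n := fs_zpow (hcv y) hcp n
        obtain ⟨e, he⟩ := abrep hcl (y ^ n)
        set y' := (SF.toList.map fun t => t ^ e t).prod with hy'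
        have h2 : Abelianization.of y' = Abelianization.of (y ^ n) := by
          have e1 : Abelianization.of y' =
              ((SF.toList.map fun t => t ^ e t).map Abelianization.of).prod :=
            map_list_prod _ _
          rw [e1, List.map_map, he,
            ← listProd_toList SF fun t => Abelianization.of t ^ e t]
          try simp [Function.comp_def, map_zpow]
        have k1 : commHom ρ hcv (y ^ n) = commHom ρ hcv y' := by
          have m1 : y ^ n * y'⁻¹ ∈ (⊤ : Subgroup H).lowerCentralSeries 1 :=
            (of_eq_one_iff _).1 (by rw [map_mul, map_inv, h2]; all_goals group)
          have := commHom_eq_one_of_mem hcv m1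
          rw [map_mul, map_inv] at this
          exact mul_inv_eq_one.1 this
        have h3 : ⁅ρ, y⁆ ^ n = commHom ρ hcv y' := by
          rw [← k1, map_zpow]
          rfl
        refine ⟨SF.toList.map fun t => (⁅ρ, t⁆, e t), ?_, ?_⟩
        · intro q hq
          obtain ⟨t, ht, rfl⟩ := List.mem_map.1 hq
          exact RF_mem_step hρ (Finset.mem_toList.1 ht)
        · have h4 : commHom ρ hcv y' =
              ((SF.toList.map fun t => t ^ e t).map (commHom ρ hcv)).prod :=
            map_list_prod _ _
          rw [h1, h3, h4, List.map_map, List.map_map]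
          try simp [Function.comp_def, map_zpow]
      -- flatten a product of brackets
      have flat : ∀ (y : H) (L : List (H × ℤ)), (∀ p ∈ L, p.1 ∈ RF SF J) →
          ∃ l2 : List (H × ℤ), (∀ q ∈ l2, q.1 ∈ RF SF (J + 1)) ∧
          (L.map fun p => ⁅p.1 ^ p.2, y⁆).prod = (l2.map fun q => q.1 ^ q.2).prod := by
        intro y L
        induction L with
        | nil => exact fun _ => ⟨[], by simp, by simp⟩
        | cons p L ihL =>
            intro hL
            obtain ⟨l2, hl2a, hl2b⟩ := ihL fun q hq => hL q (List.mem_cons_of_mem _ hq)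
            obtain ⟨l1, hl1a, hl1b⟩ := expand y p.1 (hL p (List.mem_cons_self)) p.2
            refine ⟨l1 ++ l2, ?_, ?_⟩
            · intro q hq
              rcases List.mem_append.1 hq with h | h
              · exact hl1a q h
              · exact hl2a q h
            · rw [List.map_cons, List.prod_cons, hl1b, hl2b, List.map_append,
                List.prod_append]
      -- main closure induction
      rw [hN, Subgroup.lowerCentralSeries_succ] at hu
      induction hu using Subgroup.closure_induction with
      | mem x hx =>
          obtain ⟨a, ha, y, -, hxeq⟩ := hx
          obtain ⟨L, hL1, hz⟩ := spanMod a ha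
          set W := (L.map fun p => p.1 ^ p.2).prod with hW
          have hWl : W ∈ (⊤ : Subgroup H).lowerCentralSeries J := by
            apply Subgroup.list_prod_mem
            intro w hw
            obtain ⟨p, hp, rfl⟩ := List.mem_map.1 hw
            exact Subgroup.zpow_mem _ (RF_mem_lcs SF J (hL1 p hp)) _
          have h0 : ⁅W⁻¹ * a, y⁆ = 1 := htriv _ (comm_mem_lcs_succ hz y)
          have hxc : x = ⁅a, y⁆ := by rw [← hxeq]
          have h1 : ⁅a, y⁆ = ⁅W, y⁆ := by
            have haW : a = W * (W⁻¹ * a) := by group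
            rw [haW, fs_mul (by rw [h0]; exact central_one), h0, mul_one]
          have h2 : ⁅W, y⁆ = (L.map fun p => ⁅p.1 ^ p.2, y⁆).prod := by
            have hhc : ∀ w ∈ (⊤ : Subgroup H).lowerCentralSeries (J + 1), Central w :=
              fun w hw => htriv.central hw
            have hmem : ∀ w ∈ L.map fun p => p.1 ^ p.2, w ∈ (⊤ : Subgroup H).lowerCentralSeries J := by
              intro w hw
              obtain ⟨p, hp, rfl⟩ := List.mem_map.1 hw
              exact Subgroup.zpow_mem _ (RF_mem_lcs SF J (hL1 p hp)) _
            rw [hW, fs_listprod hhc y _ hmem, List.map_map]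
            rfl
          obtain ⟨l2, hl2a, hl2b⟩ := flat y L hL1
          obtain ⟨M, hM⟩ := merge_list (RF SF (J + 1)) l2 hl2a
            fun q hq => htriv.mem_center (RF_mem_lcs _ _ (hl2a q hq))
          exact ⟨M, by rw [hxc, h1, h2, hl2b, hM]⟩
      | one => exact ⟨0, by simp⟩
      | mul a b _ _ iha ihb =>
          obtain ⟨m1, h1⟩ := iha; obtain ⟨m2, h2⟩ := ihb
          refine ⟨m1 + m2, ?_⟩
          rw [h1, h2, ← Subgroup.coe_mul, ← Finset.prod_mul_distrib]
          simp [zpow_add]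
      | inv a _ iha =>
          obtain ⟨m1, h1⟩ := iha
          refine ⟨-m1, ?_⟩
          rw [h1, ← Subgroup.coe_inv, ← Finset.prod_inv_distrib]
          simp [zpow_neg]


/-! ### Geodesics in the abelianization, and the layer theorem -/

section Layer

variable {G : Type} [Group G] [Finite G] {S : Set G}

theorem image_symm (hsym : ∀ x ∈ S, x⁻¹ ∈ S) :
    ∀ x ∈ Abelianization.of '' S, x⁻¹ ∈ Abelianization.of '' S := by
  rintro x ⟨a, ha, rfl⟩
  exact ⟨a⁻¹, hsym a ha, map_inv _ a⟩

theorem image_closure (hcl : Subgroup.closure S = ⊤) :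
    Subgroup.closure (Abelianization.of '' S) = (⊤ : Subgroup (Abelianization G)) := by
  rw [← MonoidHom.map_closure, hcl]
  exact Subgroup.map_top_of_surjective _
    fun x => QuotientGroup.induction_on x fun g => ⟨g, rfl⟩

theorem geodesic (hsym : ∀ x ∈ S, x⁻¹ ∈ S) (hcl : Subgroup.closure S = ⊤)
    (x : Abelianization G) :
    ∃ lab : List (Abelianization G), (∀ t ∈ lab, t ∈ Abelianization.of '' S) ∧
      lab.length ≤ cayleyDiam (Abelianization.of '' S) ∧ lab.prod = x := by
  obtain ⟨l, a, b, c⟩ := hasWord_wordLength (image_symm hsym) (image_closure hcl) x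
  exact ⟨l, a, b.trans (wordLength_le_cayleyDiam (Abelianization.of '' S) x), c⟩

theorem lift_list : ∀ lab : List (Abelianization G),
    (∀ t ∈ lab, t ∈ Abelianization.of '' S) →
    ∃ l : List G, (∀ x ∈ l, x ∈ S) ∧ l.length = lab.length ∧
      l.map Abelianization.of = lab
  | [] => fun _ => ⟨[], by simp, by simp, by simp⟩
  | t :: lab => fun h => by
      obtain ⟨l, a, b, c⟩ := lift_list lab fun x hx => h x (List.mem_cons_of_mem _ hx)
      obtain ⟨g, hg, rfl⟩ := h t (List.mem_cons_self)
      refine ⟨g :: l, ?_, by simp [b], by simp [c]⟩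
      intro x hx
      rcases List.mem_cons.1 hx with rfl | hx
      exacts [hg, a x hx]

theorem step1 (hsym : ∀ x ∈ S, x⁻¹ ∈ S) (hcl : Subgroup.closure S = ⊤) (g : G) :
    ∃ w : G, HasWord S w (cayleyDiam (Abelianization.of '' S)) ∧
      w⁻¹ * g ∈ (⊤ : Subgroup G).lowerCentralSeries 1 := by
  obtain ⟨lab, a, b, c⟩ := geodesic hsym hcl (Abelianization.of g)
  obtain ⟨l, la, lb, lc⟩ := lift_list lab a
  refine ⟨l.prod, ⟨l, la, le_trans (le_of_eq lb) b, rfl⟩, ?_⟩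
  apply (of_eq_one_iff _).1
  rw [map_mul, map_inv]
  have h1 : Abelianization.of l.prod = lab.prod := by
    rw [map_list_prod, lc]
  rw [h1, c]
  all_goals group

theorem layer [DecidableEq G] (hsym : ∀ x ∈ S, x⁻¹ ∈ S) (hcl : Subgroup.closure S = ⊤)
    {SF : Finset G} (hSF : (SF : Set G) = S) (k : ℕ) :
    ∀ z ∈ (⊤ : Subgroup G).lowerCentralSeries (k + 1), ∃ w : G,
      HasWord S w (SF.card ^ (k + 2) * (SF.card *
        (8 * 4 ^ (k + 2) * (Nat.sqrt (cayleyDiam (Abelianization.of '' S)) + 1)))) ∧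
      w⁻¹ * z ∈ (⊤ : Subgroup G).lowerCentralSeries (k + 2) := by
  intro z hz
  set D := cayleyDiam (Abelianization.of '' S) with hD
  set N := (⊤ : Subgroup G).lowerCentralSeries (k + 2) with hN
  let π : G →* G ⧸ N := QuotientGroup.mk' N
  letI : DecidableEq (G ⧸ N) := Classical.decEq _
  have hπs : Function.Surjective π := QuotientGroup.mk'_surjective N
  have htrivQ : TrivAt (G ⧸ N) (k + 2) := trivAt_quotient _
  have hclG : Subgroup.closure (SF : Set G) = ⊤ := by rw [hSF]; exact hcl
  have hclQ : Subgroup.closure ((SF.image π : Finset (G ⧸ N)) : Set (G ⧸ N)) = ⊤ := by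
    rw [Finset.coe_image, ← MonoidHom.map_closure, hclG]
    exact Subgroup.map_top_of_surjective π hπs
  have hsubS : ∀ x ∈ SF, x ∈ S := fun x hx => hSF ▸ Finset.mem_coe.2 hx
  obtain ⟨m, hm⟩ := spanExact (k + 1) (SF.image π) hclQ htrivQ (π z) (lcs_map π _ hz)
  rw [RF_image π SF (k + 1)] at hm
  -- a word representing `(π ρ) ^ n` for a basic commutator `ρ` of weight `k+2`
  have single : ∀ ρ ∈ RF SF (k + 1), ∀ n : ℤ, ∃ wρ : G,
      HasWord S wρ (SF.card * (8 * 4 ^ (k + 2) * (Nat.sqrt D + 1))) ∧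
      π wρ = (π ρ) ^ n := by
    intro ρ hρ n
    obtain ⟨ρ₂, hρ₂, b, hb, rfl⟩ := RF_destruct SF k hρ
    have hρ₂l : π ρ₂ ∈ (⊤ : Subgroup (G ⧸ N)).lowerCentralSeries k := lcs_map π _ (RF_mem_lcs SF k hρ₂)
    have hcv : ∀ q : G ⧸ N, Central ⁅π ρ₂, q⁆ :=
      fun q => htrivQ.central (comm_mem_lcs_succ hρ₂l q)
    obtain ⟨lab, la, lb, lc⟩ := geodesic hsym hcl (Abelianization.of (b ^ n))
    obtain ⟨l, lla, llb, llc⟩ := lift_list lab la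
    set F := l.toFinset with hF
    set p0 := (F.toList.map fun e => e ^ l.count e).prod with hp0
    have hofp : Abelianization.of p0 = Abelianization.of (b ^ n) := by
      have e1 : Abelianization.of p0 =
          ((F.toList.map fun e => e ^ l.count e).map Abelianization.of).prod :=
        map_list_prod _ _
      have e2 : ((F.toList.map fun e => e ^ l.count e).map Abelianization.of).prod
          = ∏ e ∈ F, Abelianization.of e ^ l.count e := by
        rw [List.map_map, ← listProd_toList F fun e => Abelianization.of e ^ l.count e]
        simp [Function.comp_def]
      rw [e1, e2, hF, ← Finset.prod_list_map_count l Abelianization.of, llc, lc]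
    have hker : commHom (π ρ₂) hcv (π (b ^ n)) = commHom (π ρ₂) hcv (π p0) := by
      have m1 : b ^ n * p0⁻¹ ∈ (⊤ : Subgroup G).lowerCentralSeries 1 :=
        (of_eq_one_iff _).1 (by rw [map_mul, map_inv, hofp]; all_goals group)
      have m2 : π (b ^ n) * (π p0)⁻¹ ∈ (⊤ : Subgroup (G ⧸ N)).lowerCentralSeries 1 := by
        have := lcs_map π _ m1
        rwa [map_mul, map_inv] at this
      have m3 := commHom_eq_one_of_mem hcv m2
      rw [map_mul, map_inv] at m3
      exact mul_inv_eq_one.1 m3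
    have hcountD : ∀ e : G, l.count e ≤ D := fun e =>
      le_trans List.count_le_length (le_trans (le_of_eq llb) lb)
    have hsubF : ∀ e ∈ F, e ∈ S := fun e he => lla e (List.mem_toFinset.1 he)
    -- atoms
    have atom : ∀ e ∈ F, ∃ wa : G,
        HasWord S wa (8 * 4 ^ (k + 2) * (Nat.sqrt D + 1)) ∧
        π wa = commHom (π ρ₂) hcv ((π e) ^ l.count e) := by
      intro e he
      have hbS : e ∈ S := hsubF e he
      set kb := l.count e with hkb
      set al := Nat.sqrt kb + 1 with hal
      set q := kb / al with hqd
      set r := kb % al with hrd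
      have hkD : kb ≤ D := hcountD e
      have hsk : Nat.sqrt kb ≤ Nat.sqrt D := Nat.sqrt_le_sqrt hkD
      have halpos : 0 < al := by omega
      have hsq : kb < al * al := by
        have h0 := Nat.lt_succ_sqrt kb
        have h1 : Nat.succ (Nat.sqrt kb) = al := by omega
        rwa [h1] at h0
      have hq2 : q < al := by
        rw [hqd]
        exact (Nat.div_lt_iff_lt_mul halpos).2 hsq
      have hqle : q ≤ Nat.sqrt D := by omega
      have hale : al ≤ Nat.sqrt D + 1 := by omega
      have hrle : r ≤ Nat.sqrt D := by
        have h2 : r < al := by rw [hrd]; exact Nat.mod_lt _ halpos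
        omega
      refine ⟨⁅ρ₂ ^ q, e ^ al⁆ * ⁅ρ₂, e ^ r⁆, ?_, ?_⟩
      · have c2 : HasWord S ρ₂ (4 ^ (k + 1)) := RF_hasWord hsym hsubS k hρ₂
        have w1 : HasWord S (ρ₂ ^ q) (q * 4 ^ (k + 1)) := c2.pow q
        have wb : HasWord S (e ^ al) al := ((hasWord_mem hbS).pow al).mono (by omega)
        have wb2 : HasWord S (e ^ r) r := ((hasWord_mem hbS).pow r).mono (by omega)
        refine ((w1.commutator hsym wb).mul (c2.commutator hsym wb2)).mono ?_
        have hA : 1 ≤ 4 ^ (k + 1) := Nat.one_le_pow _ _ (by norm_num)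
        have h4 : (4 : ℕ) ^ (k + 2) = 4 * 4 ^ (k + 1) := by ring
        set A := 4 ^ (k + 1)
        set Sq := Nat.sqrt D
        calc 2 * (q * A + al) + 2 * (A + r)
            ≤ 2 * (Sq * A + (Sq + 1)) + 2 * (A + Sq) := by
              have := Nat.mul_le_mul_right A hqle
              omega
          _ ≤ 8 * (4 * A) * (Sq + 1) := by nlinarith
          _ = 8 * 4 ^ (k + 2) * (Sq + 1) := by rw [h4]
      · rw [map_mul, map_commutatorElement, map_commutatorElement, map_pow, map_pow,
          map_pow, fs_pow (hcv ((π e) ^ al)) q]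
        show (commHom (π ρ₂) hcv ((π e) ^ al)) ^ q * commHom (π ρ₂) hcv ((π e) ^ r) = _
        rw [← map_pow, ← map_mul, ← pow_mul, ← pow_add]
        congr 2
        rw [hqd, hrd]
        exact Nat.div_add_mod kb al
    -- aggregate the atoms over `F.toList`
    have agg : ∀ lf : List G, (∀ e ∈ lf, e ∈ F) → ∃ wl : G,
        HasWord S wl (lf.length * (8 * 4 ^ (k + 2) * (Nat.sqrt D + 1))) ∧
        π wl = (lf.map fun e => commHom (π ρ₂) hcv ((π e) ^ l.count e)).prod := by
      intro lf
      induction lf with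
      | nil => exact fun _ => ⟨1, (hasWord_one S).mono (Nat.zero_le _), by simp⟩
      | cons e lf ihlf =>
          intro hlf
          obtain ⟨wl, hwl1, hwl2⟩ := ihlf fun x hx => hlf x (List.mem_cons_of_mem _ hx)
          obtain ⟨wa, hwa1, hwa2⟩ := atom e (hlf e (List.mem_cons_self))
          refine ⟨wa * wl, (hwa1.mul hwl1).mono (by simp [List.length_cons]; ring_nf; omega), ?_⟩
          rw [map_mul, hwa2, hwl2, List.map_cons, List.prod_cons]
    obtain ⟨wl, hwl1, hwl2⟩ := agg F.toList fun x hx => Finset.mem_toList.1 hx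
    have hFcard : F.toList.length ≤ SF.card := by
      rw [Finset.length_toList]
      apply Finset.card_le_card
      intro x hx
      have hxS : x ∈ S := hsubF x hx
      have hx2 : x ∈ (SF : Set G) := by rw [hSF]; exact hxS
      exact Finset.mem_coe.1 hx2
    refine ⟨wl, hwl1.mono (Nat.mul_le_mul_right _ hFcard), ?_⟩
    rw [hwl2]
    -- identify the product with `(π ⁅ρ₂, b⁆) ^ n`
    have t0 : π p0 = (F.toList.map fun e => (π e) ^ l.count e).prod := by
      rw [hp0, map_list_prod, List.map_map]
      simp [Function.comp_def]
    have t1 : (F.toList.map fun e => commHom (π ρ₂) hcv ((π e) ^ l.count e)).prod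
        = commHom (π ρ₂) hcv (π p0) := by
      rw [t0, map_list_prod, List.map_map]
      simp [Function.comp_def]
    rw [t1, ← hker, map_zpow, map_zpow]
    rw [map_commutatorElement]
    rfl
  -- build the full word by induction over the finset of shapes
  have build : ∀ T : Finset (G ⧸ N), T ⊆ (RF SF (k + 1)).image π → ∃ w : G,
      HasWord S w (T.card * (SF.card * (8 * 4 ^ (k + 2) * (Nat.sqrt D + 1)))) ∧
      π w = ((∏ ρ' ∈ T, ctrOf ρ' ^ m ρ' : Subgroup.center (G ⧸ N)) : G ⧸ N) := by
    intro T
    induction T using Finset.induction_on with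
    | empty => exact fun _ => ⟨1, (hasWord_one S).mono (Nat.zero_le _), by simp⟩
    | @insert ρ' T hρ'mem ihT =>
        intro hsub
        obtain ⟨w, hw1, hw2⟩ := ihT fun x hx => hsub (Finset.mem_insert_of_mem hx)
        obtain ⟨ρ, hρ, rfl⟩ := Finset.mem_image.1 (hsub (Finset.mem_insert_self _ _))
        obtain ⟨wρ, hwρ1, hwρ2⟩ := single ρ hρ (m (π ρ))
        have hcρ : π ρ ∈ Subgroup.center (G ⧸ N) :=
          htrivQ.mem_center (lcs_map π _ (RF_mem_lcs SF (k + 1) hρ))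
        refine ⟨wρ * w, (hwρ1.mul hw1).mono ?_, ?_⟩
        · rw [Finset.card_insert_of_notMem hρ'mem]; ring_nf; omega
        · rw [map_mul, hwρ2, hw2, Finset.prod_insert hρ'mem]
          push_cast
          rw [ctrOf_coe hcρ]
  obtain ⟨W, hW1, hW2⟩ := build _ (subset_refl _)
  refine ⟨W, hW1.mono ?_, ?_⟩
  · apply Nat.mul_le_mul_right
    exact le_trans Finset.card_image_le (RF_card SF (k + 1))
  · have hone : π (W⁻¹ * z) = 1 := by
      rw [map_mul, map_inv, hW2, ← hm]
      all_goals group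
    exact (QuotientGroup.eq_one_iff _).1 hone

end Layer


/-! ### Assembly -/

section Assemble

variable {G : Type} [Group G] [Finite G] {S : Set G}

theorem total_bound [DecidableEq G] (hsym : ∀ x ∈ S, x⁻¹ ∈ S)
    (hcl : Subgroup.closure S = ⊤) {SF : Finset G} (hSF : (SF : Set G) = S)
    (hSF1 : 1 ≤ SF.card) {c : ℕ} (hlcs : (⊤ : Subgroup G).lowerCentralSeries c = ⊥) :
    ∀ g : G, HasWord S g (cayleyDiam (Abelianization.of '' S) +
      c * (SF.card ^ (c + 2) * (SF.card * (8 * 4 ^ (c + 2) *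
        (Nat.sqrt (cayleyDiam (Abelianization.of '' S)) + 1))))) := by
  set D := cayleyDiam (Abelianization.of '' S) with hD
  set BND := SF.card ^ (c + 2) * (SF.card * (8 * 4 ^ (c + 2) * (Nat.sqrt D + 1))) with hBND
  have hlayer_le : ∀ k : ℕ, k + 2 ≤ c + 2 →
      SF.card ^ (k + 2) * (SF.card * (8 * 4 ^ (k + 2) * (Nat.sqrt D + 1))) ≤ BND := by
    intro k hk
    rw [hBND]
    gcongr <;> omega
  have fuel : ∀ f k : ℕ, c ≤ k + f → 1 ≤ k → ∀ z ∈ (⊤ : Subgroup G).lowerCentralSeries k,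
      HasWord S z (f * BND) := by
    intro f
    induction f with
    | zero =>
        intro k hck hk z hz
        have h1 : z ∈ (⊤ : Subgroup G).lowerCentralSeries c :=
          (⊤ : Subgroup G).lowerCentralSeries_antitone (show c ≤ k by omega) hz
        rw [hlcs] at h1
        rw [Subgroup.mem_bot.1 h1]
        exact (hasWord_one S).mono (Nat.zero_le _)
    | succ f ihf =>
        intro k hck hk z hz
        by_cases hkc : c ≤ k
        · have h1 : z ∈ (⊤ : Subgroup G).lowerCentralSeries c := (⊤ : Subgroup G).lowerCentralSeries_antitone hkc hz
          rw [hlcs] at h1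
          rw [Subgroup.mem_bot.1 h1]
          exact (hasWord_one S).mono (Nat.zero_le _)
        · push_neg at hkc
          obtain ⟨k', rfl⟩ : ∃ k', k = k' + 1 := ⟨k - 1, by omega⟩
          obtain ⟨w, hw1, hw2⟩ := layer hsym hcl hSF k' z hz
          have hw1' : HasWord S w BND := hw1.mono (hlayer_le k' (by omega))
          have hz' : HasWord S (w⁻¹ * z) (f * BND) :=
            ihf (k' + 2) (by omega) (by omega) _ hw2
          have hg : z = w * (w⁻¹ * z) := by group
          rw [hg]
          exact (hw1'.mul hz').mono (by ring_nf; omega)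
  intro g
  obtain ⟨w, hw1, hw2⟩ := step1 hsym hcl g
  have h2 : HasWord S (w⁻¹ * g) (c * BND) := fuel c 1 (by omega) (by omega) _ hw2
  have hg : g = w * (w⁻¹ * g) := by group
  rw [hg]
  exact hw1.mul h2

theorem diam_zero {c : ℕ} (hsym : ∀ x ∈ S, x⁻¹ ∈ S) (hcl : Subgroup.closure S = ⊤)
    (hlcs : (⊤ : Subgroup G).lowerCentralSeries c = ⊥)
    (hD : cayleyDiam (Abelianization.of '' S) = 0) : cayleyDiam S = 0 := by
  have htriv : ∀ x : Abelianization G, x = 1 := by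
    intro x
    obtain ⟨l, a, b, cprod⟩ := hasWord_wordLength (image_symm hsym) (image_closure hcl) x
    have hlen : l.length = 0 := by
      have h2 := wordLength_le_cayleyDiam (Abelianization.of '' S) x
      omega
    rw [List.length_eq_zero_iff.1 hlen] at cprod
    simpa using cprod.symm
  have h1 : (⊤ : Subgroup G).lowerCentralSeries 1 = ⊤ := by
    rw [eq_top_iff]
    intro g _
    exact (of_eq_one_iff g).1 (htriv _)
  have hall : ∀ n : ℕ, (⊤ : Subgroup G).lowerCentralSeries n = ⊤ := by
    intro n
    induction n with
    | zero => rfl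
    | succ n ihn =>
        have h2 : (⊤ : Subgroup G).lowerCentralSeries (n + 1) =
            ⁅(⊤ : Subgroup G).lowerCentralSeries n, (⊤ : Subgroup G)⁆ := rfl
        rw [h2, ihn]; exact h1
  have hone : ∀ g : G, g = 1 := by
    intro g
    have hg : g ∈ (⊤ : Subgroup G).lowerCentralSeries c := (hall c).symm ▸ Subgroup.mem_top g
    rw [hlcs] at hg
    exact Subgroup.mem_bot.1 hg
  apply Nat.le_zero.1
  apply cayleyDiam_le
  intro g
  rw [hone g]
  exact wordLength_le_of_hasWord (hasWord_one S)

end Assemble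

end CayleyAux

/-- For all integers `c ≥ 1` and `s ≥ 2` there exists `C = C(c,s)` such that for every finite
nilpotent group `G` of nilpotency class at most `c` and every symmetric generating set `S` of
size `s`, `diam(Γ(G,S)) ≤ diam(Γ(G^{ab}, S̄)) + C * √(diam(Γ(G^{ab}, S̄)))`, where `S̄` is the
image of `S` in the abelianisation. -/
theorem cayleyDiam_le_abelianization_diam_add_sqrt (c s : ℕ) (hc : 1 ≤ c) (hs : 2 ≤ s) :
    ∃ C : ℝ, 0 < C ∧
      ∀ (G : Type) (_ : Group G) (_ : Finite G) (S : Set G),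
        (⊤ : Subgroup G).lowerCentralSeries c = ⊥ →
        (∀ x ∈ S, x⁻¹ ∈ S) → Subgroup.closure S = ⊤ → S.ncard = s →
        (cayleyDiam S : ℝ) ≤ (cayleyDiam (Abelianization.of '' S) : ℝ) +
          C * Real.sqrt (cayleyDiam (Abelianization.of '' S) : ℝ) := by
  refine ⟨((16 * c * s ^ (c + 3) * 4 ^ (c + 2) + 1 : ℕ) : ℝ), by
    exact_mod_cast Nat.succ_pos _, ?_⟩
  intro G gI fI S hlcs hsym hcl hcard
  letI := gI
  letI := fI
  letI : DecidableEq G := Classical.decEq G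
  set SF : Finset G := (Set.toFinite S).toFinset with hSFdef
  have hSF : (SF : Set G) = S := Set.Finite.coe_toFinset _
  have hcardSF : SF.card = s := by
    rw [hSFdef, ← Set.ncard_eq_toFinset_card S (Set.toFinite S), hcard]
  have hSF1 : 1 ≤ SF.card := by omega
  set D := cayleyDiam (Abelianization.of '' S) with hD
  by_cases hD0 : D = 0
  · have h0 : cayleyDiam S = 0 := CayleyAux.diam_zero hsym hcl hlcs hD0
    simp [h0, hD0]
  · have hD1 : 1 ≤ D := Nat.one_le_iff_ne_zero.2 hD0
    have main := CayleyAux.total_bound hsym hcl hSF hSF1 hlcs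
    have hmain : cayleyDiam S ≤ D + c * (SF.card ^ (c + 2) * (SF.card *
        (8 * 4 ^ (c + 2) * (Nat.sqrt D + 1)))) :=
      CayleyAux.cayleyDiam_le S fun g => CayleyAux.wordLength_le_of_hasWord (main g)
    rw [hcardSF] at hmain
    have hcast : (cayleyDiam S : ℝ) ≤ (D : ℝ) +
        ((c * (s ^ (c + 2) * (s * (8 * 4 ^ (c + 2) * (Nat.sqrt D + 1)))) : ℕ) : ℝ) := by
      exact_mod_cast hmain
    have hsq1 : (1 : ℝ) ≤ Real.sqrt D := by
      rw [show (1 : ℝ) = Real.sqrt 1 from Real.sqrt_one.symm]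
      exact Real.sqrt_le_sqrt (by exact_mod_cast hD1)
    have hsqn : ((Nat.sqrt D : ℕ) : ℝ) ≤ Real.sqrt D := by
      rw [Real.le_sqrt (by positivity) (by positivity)]
      exact_mod_cast Nat.sqrt_le' D
    have h2 : ((Nat.sqrt D : ℕ) : ℝ) + 1 ≤ 2 * Real.sqrt D := by nlinarith
    have hfinal : ((c * (s ^ (c + 2) * (s * (8 * 4 ^ (c + 2) * (Nat.sqrt D + 1)))) : ℕ) : ℝ)
        ≤ ((16 * c * s ^ (c + 3) * 4 ^ (c + 2) + 1 : ℕ) : ℝ) * Real.sqrt D := by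
      push_cast
      have hA : (0 : ℝ) ≤ (c : ℝ) * ((s : ℝ) ^ (c + 2) * ((s : ℝ) * (8 * 4 ^ (c + 2)))) := by
        positivity
      calc (c : ℝ) * ((s : ℝ) ^ (c + 2) * ((s : ℝ) * (8 * 4 ^ (c + 2) * ((Nat.sqrt D : ℝ) + 1))))
          = ((c : ℝ) * ((s : ℝ) ^ (c + 2) * ((s : ℝ) * (8 * 4 ^ (c + 2))))) *
              ((Nat.sqrt D : ℝ) + 1) := by ring
        _ ≤ ((c : ℝ) * ((s : ℝ) ^ (c + 2) * ((s : ℝ) * (8 * 4 ^ (c + 2))))) *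
              (2 * Real.sqrt D) := by
            exact mul_le_mul_of_nonneg_left h2 hA
        _ = (16 * (c : ℝ) * (s : ℝ) ^ (c + 3) * 4 ^ (c + 2)) * Real.sqrt D := by ring
        _ ≤ (16 * (c : ℝ) * (s : ℝ) ^ (c + 3) * 4 ^ (c + 2) + 1) * Real.sqrt D := by
            have := Real.sqrt_nonneg (D : ℝ)
            nlinarith
    calc (cayleyDiam S : ℝ) ≤ (D : ℝ) +
        ((c * (s ^ (c + 2) * (s * (8 * 4 ^ (c + 2) * (Nat.sqrt D + 1)))) : ℕ) : ℝ) := hcast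
      _ ≤ (D : ℝ) + ((16 * c * s ^ (c + 3) * 4 ^ (c + 2) + 1 : ℕ) : ℝ) * Real.sqrt D := by
          linarith
end
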